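/- arXiv:2402.18703 — 3 statements merged into one kernel-verified Lean document; each statement's English description precedes it below -/
import Mathlib

section
/- For every quantum channel Φ on M_d(ℂ) there exists N ≤ d² such that for all n ≥ 0: M(Φ^N) = M(Φ^{N+n}), D(Φ^N) = D(Φ^{N+n}), and M_E(Φ^N) = M_E(Φ^{N+n}); that is, the one-shot zero-error classical, quantum, and entanglement-assisted classical capacities of Φ^n all stabilize after at most d² iterations. -/
open Matrix Filter
open scoped ComplexOrder

/-- The algebra of `n × n` complex matrices. -/
abbrev Mat (n : ℕ) := Matrix (Fin n) (Fin n) ℂ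

/-- A linear map between matrix algebras is a quantum channel if it admits a Kraus
representation `Φ(X) = ∑ i, K i * X * (K i)ᴴ` with `∑ i, (K i)ᴴ * K i = 1`. -/
def IsChannel {m n : ℕ} (Φ : Matrix (Fin m) (Fin m) ℂ →ₗ[ℂ] Mat n) : Prop :=
  ∃ (p : ℕ) (K : Fin p → Matrix (Fin n) (Fin m) ℂ),
    (∀ X, Φ X = ∑ i, K i * X * (K i)ᴴ) ∧ ∑ i, (K i)ᴴ * K i = 1

/-- A quantum state: positive semidefinite with unit trace. -/
def IsState {n : ℕ} (ρ : Mat n) : Prop := ρ.PosSemidef ∧ ρ.trace = 1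

/-- The rank-one matrix `|ψ⟩⟨ψ|`. -/
def pureState {ι : Type*} (ψ : ι → ℂ) : Matrix ι ι ℂ :=
  Matrix.of fun i j => ψ i * star (ψ j)

/-- `ψ` is a unit vector. -/
def IsUnitVec {ι : Type*} [Fintype ι] (ψ : ι → ℂ) : Prop :=
  ∑ i, star (ψ i) * ψ i = 1

/-- c-scrambling: outputs of orthogonal pure states are never orthogonal. -/
def CScrambling {n : ℕ} (Φ : Mat n →ₗ[ℂ] Mat n) : Prop :=
  ∀ ψ φ : Fin n → ℂ, IsUnitVec ψ → IsUnitVec φ → ∑ i, star (ψ i) * φ i = 0 →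
    0 < (Φ (pureState ψ) * Φ (pureState φ)).trace

/-- A subspace `C ⊆ ℂ^n` is correctable for `Φ`. -/
def Correctable {n : ℕ} (Φ : Mat n →ₗ[ℂ] Mat n) (C : Submodule ℂ (Fin n → ℂ)) : Prop :=
  ∃ R : Mat n →ₗ[ℂ] Mat n, IsChannel R ∧
    ∀ ρ : Mat n, IsState ρ → LinearMap.range ρ.mulVecLin ≤ C → R (Φ ρ) = ρ

/-- q-scrambling: no correctable subspace of dimension ≥ 2. -/
def QScrambling {n : ℕ} (Φ : Mat n →ₗ[ℂ] Mat n) : Prop :=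
  ∀ C : Submodule ℂ (Fin n → ℂ), Correctable Φ C → Module.finrank ℂ C ≤ 1

/-- Apply `Φ` to the first tensor factor: `(Φ ⊗ id) M`. -/
def tensorId {d₀ n d₁ : ℕ} (Φ : Matrix (Fin d₀) (Fin d₀) ℂ →ₗ[ℂ] Mat n)
    (M : Matrix (Fin d₀ × Fin d₁) (Fin d₀ × Fin d₁) ℂ) :
    Matrix (Fin n × Fin d₁) (Fin n × Fin d₁) ℂ :=
  Matrix.of fun p q => Φ (Matrix.of fun k l => M (k, p.2) (l, q.2)) p.1 q.1

/-- Vanishing one-shot zero-error entanglement-assisted classical capacity. -/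
def VanishingC0E {n : ℕ} (Φ : Mat n →ₗ[ℂ] Mat n) : Prop :=
  ∀ (d₀ d₁ : ℕ), 0 < d₀ → 0 < d₁ → ∀ ψ : Fin d₀ × Fin d₁ → ℂ, IsUnitVec ψ →
    ∀ E₁ E₂ : Matrix (Fin d₀) (Fin d₀) ℂ →ₗ[ℂ] Mat n, IsChannel E₁ → IsChannel E₂ →
      0 < (tensorId (Φ ∘ₗ E₁) (pureState ψ) * tensorId (Φ ∘ₗ E₂) (pureState ψ)).trace

/-- Mixing channel: `Φ^n X → Tr(X) ρ⋆` entrywise. -/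
def Mixing {n : ℕ} (Φ : Module.End ℂ (Mat n)) : Prop :=
  ∃ ρ : Mat n, IsState ρ ∧
    ∀ X : Mat n, Tendsto (fun k => (Φ ^ k) X) atTop (nhds (X.trace • ρ))

/-- Strictly positive channel: every state is sent to a positive definite matrix. -/
def StrictlyPositive {n : ℕ} (Φ : Mat n →ₗ[ℂ] Mat n) : Prop :=
  ∀ ρ : Mat n, IsState ρ → (Φ ρ).PosDef

/-- Primitive channel: mixing with positive definite invariant state. -/
def Primitive {n : ℕ} (Φ : Module.End ℂ (Mat n)) : Prop :=
  ∃ ρ : Mat n, IsState ρ ∧ ρ.PosDef ∧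
    ∀ X : Mat n, Tendsto (fun k => (Φ ^ k) X) atTop (nhds (X.trace • ρ))

/-- Classical scrambling time `c(Φ)`. -/
noncomputable def cTime {n : ℕ} (Φ : Module.End ℂ (Mat n)) : ℕ∞ :=
  sInf {N : ℕ∞ | ∃ k : ℕ, N = k ∧ 1 ≤ k ∧ CScrambling (Φ ^ k)}

/-- Quantum scrambling time `q(Φ)`. -/
noncomputable def qTime {n : ℕ} (Φ : Module.End ℂ (Mat n)) : ℕ∞ :=
  sInf {N : ℕ∞ | ∃ k : ℕ, N = k ∧ 1 ≤ k ∧ QScrambling (Φ ^ k)}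

/-- Entanglement-assisted classical scrambling time `c_E(Φ)`. -/
noncomputable def cETime {n : ℕ} (Φ : Module.End ℂ (Mat n)) : ℕ∞ :=
  sInf {N : ℕ∞ | ∃ k : ℕ, N = k ∧ 1 ≤ k ∧ VanishingC0E (Φ ^ k)}

/-- Wielandt index `w(Φ)`. -/
noncomputable def wTime {n : ℕ} (Φ : Module.End ℂ (Mat n)) : ℕ∞ :=
  sInf {N : ℕ∞ | ∃ k : ℕ, N = k ∧ 1 ≤ k ∧ StrictlyPositive (Φ ^ k)}

/-- `M(Φ)`: the maximal size of a zero-error classical code for `Φ`. -/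
noncomputable def Mclassical {n : ℕ} (Φ : Mat n →ₗ[ℂ] Mat n) : ℕ :=
  sSup {M : ℕ | ∃ ψ : Fin M → Fin n → ℂ, (∀ m, IsUnitVec (ψ m)) ∧
    ∀ m m', m ≠ m' → (Φ (pureState (ψ m)) * Φ (pureState (ψ m'))).trace = 0}

/-- `D(Φ)`: the maximal dimension of a correctable subspace for `Φ`. -/
noncomputable def Dquantum {n : ℕ} (Φ : Mat n →ₗ[ℂ] Mat n) : ℕ :=
  sSup {M : ℕ | ∃ C : Submodule ℂ (Fin n → ℂ), Correctable Φ C ∧ Module.finrank ℂ C = M}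

/-- `M_E(Φ)`: the maximal size of an entanglement-assisted zero-error classical code. -/
noncomputable def MEclassical {n : ℕ} (Φ : Mat n →ₗ[ℂ] Mat n) : ℕ :=
  sSup {M : ℕ | ∃ (d₀ d₁ : ℕ) (ψ : Fin d₀ × Fin d₁ → ℂ), 0 < d₀ ∧ 0 < d₁ ∧ IsUnitVec ψ ∧
    ∃ E : Fin M → (Matrix (Fin d₀) (Fin d₀) ℂ →ₗ[ℂ] Mat n),
      (∀ m, IsChannel (E m)) ∧
      ∀ m m', m ≠ m' →
        (tensorId (Φ ∘ₗ E m) (pureState ψ) * tensorId (Φ ∘ₗ E m') (pureState ψ)).trace = 0}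

/-- The ordered product `K_{i 0} ⋯ K_{i (n-1)}` of Kraus operators. -/
noncomputable def krausProd {d p : ℕ} (K : Fin p → Mat d) {n : ℕ} (i : Fin n → Fin p) : Mat d :=
  (List.ofFn fun t => K (i t)).prod

/-- The operator system of `Φ^n`, for `Φ` with Kraus operators `K`. -/
noncomputable def opSys {d p : ℕ} (K : Fin p → Mat d) (n : ℕ) : Submodule ℂ (Mat d) :=
  Submodule.span ℂ {X | ∃ i j : Fin n → Fin p, X = (krausProd K i)ᴴ * krausProd K j}

/-- `𝒦_n(Φ)`: the span of `n`-fold products of Kraus operators. -/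
noncomputable def kSpan {d p : ℕ} (K : Fin p → Mat d) (n : ℕ) : Submodule ℂ (Mat d) :=
  Submodule.span ℂ {X | ∃ i : Fin n → Fin p, X = krausProd K i}

/-- `A` is column stochastic. -/
def ColumnStochastic {d : ℕ} (A : Matrix (Fin d) (Fin d) ℝ) : Prop :=
  (∀ i j, 0 ≤ A i j) ∧ ∀ j, ∑ i, A i j = 1

/-- The CDUC map `Φ_{A,B}(X) = ∑ᵢⱼ A i j * X j j |i⟩⟨i| + ∑_{i≠j} B i j * X i j |i⟩⟨j|`. -/
noncomputable def cducMap {d : ℕ} (A : Matrix (Fin d) (Fin d) ℝ) (B : Mat d) :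
    Mat d →ₗ[ℂ] Mat d where
  toFun X := Matrix.of fun i j =>
    if i = j then ∑ k, (A i k : ℂ) * X k k else B i j * X i j
  map_add' X Y := by
    ext i j
    by_cases h : i = j <;>
      simp [h, Matrix.add_apply, mul_add, Finset.sum_add_distrib]
  map_smul' c X := by
    ext i j
    by_cases h : i = j <;>
      simp [h, Matrix.smul_apply, smul_eq_mul, Finset.mul_sum, mul_left_comm]

/-- The DUC map `Φ_{A,C}(X) = ∑ᵢⱼ A i j * X j j |i⟩⟨i| + ∑_{i≠j} C i j * X j i |i⟩⟨j|`. -/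
noncomputable def ducMap {d : ℕ} (A : Matrix (Fin d) (Fin d) ℝ) (C : Mat d) :
    Mat d →ₗ[ℂ] Mat d where
  toFun X := Matrix.of fun i j =>
    if i = j then ∑ k, (A i k : ℂ) * X k k else C i j * X j i
  map_add' X Y := by
    ext i j
    by_cases h : i = j <;>
      simp [h, Matrix.add_apply, mul_add, Finset.sum_add_distrib]
  map_smul' c X := by
    ext i j
    by_cases h : i = j <;>
      simp [h, Matrix.smul_apply, smul_eq_mul, Finset.mul_sum, mul_left_comm]

/-- The classical channel `Φ_A(X) = ∑ᵢⱼ A i j * X j j |i⟩⟨i|` of a stochastic matrix `A`. -/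
noncomputable def classicalChannel {d : ℕ} (A : Matrix (Fin d) (Fin d) ℝ) :
    Mat d →ₗ[ℂ] Mat d :=
  cducMap A 0

/-- A stochastic matrix is scrambling if any two columns overlap in some row. -/
def MatScrambling {d : ℕ} (A : Matrix (Fin d) (Fin d) ℝ) : Prop :=
  ∀ i j, ∃ k, 0 < A k i * A k j

/-- A matrix with strictly positive entries. -/
def MatStrictlyPositive {d : ℕ} (A : Matrix (Fin d) (Fin d) ℝ) : Prop :=
  ∀ i j, 0 < A i j

/-- A stochastic matrix is mixing if `1` is an eigenvalue of algebraic multiplicity one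
and there is no other eigenvalue of modulus one. -/
def MatMixing {d : ℕ} (A : Matrix (Fin d) (Fin d) ℝ) : Prop :=
  Polynomial.rootMultiplicity 1 (Matrix.charpoly (A.map Complex.ofReal)) = 1 ∧
  ∀ μ : ℂ, ‖μ‖ = 1 → (Matrix.charpoly (A.map Complex.ofReal)).IsRoot μ → μ = 1

/-- A stochastic matrix is primitive if it is mixing and its invariant probability
vector is entrywise strictly positive. -/
def MatPrimitive {d : ℕ} (A : Matrix (Fin d) (Fin d) ℝ) : Prop :=
  MatMixing A ∧
    ∀ v : Fin d → ℝ, (∀ i, 0 ≤ v i) → ∑ i, v i = 1 → A *ᵥ v = v → ∀ i, 0 < v i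

/-- The scrambling time of a stochastic matrix. -/
noncomputable def cMat {d : ℕ} (A : Matrix (Fin d) (Fin d) ℝ) : ℕ∞ :=
  sInf {N : ℕ∞ | ∃ k : ℕ, N = k ∧ 1 ≤ k ∧ MatScrambling (A ^ k)}

/-- The Wielandt index of a stochastic matrix. -/
noncomputable def wMat {d : ℕ} (A : Matrix (Fin d) (Fin d) ℝ) : ℕ∞ :=
  sInf {N : ℕ∞ | ∃ k : ℕ, N = k ∧ 1 ≤ k ∧ MatStrictlyPositive (A ^ k)}

/-- The matrix `A_d` from the paper (0-indexed). -/
noncomputable def Amat (d : ℕ) : Matrix (Fin d) (Fin d) ℝ :=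
  Matrix.of fun i j =>
    if (i : ℕ) = d - 1 ∧ (j : ℕ) = 0 then 1
    else if (j : ℕ) = 1 ∧ ((i : ℕ) = 0 ∨ (i : ℕ) = d - 1) then 1 / 2
    else if 2 ≤ (j : ℕ) ∧ (i : ℕ) + 1 = (j : ℕ) then 1
    else 0


/-!
The operator system `S_n = span {K_iᴴ K_j}` of `Φ^n` (words `i, j` of length `n` in the Kraus
operators) grows with `n` because `∑ K_aᴴ K_a = 1`, and `S_{n+1} = ∑_{a,b} K_aᴴ S_n K_b`. So once
`S_{N+1} = S_N` the sequence is constant from `N` on, and this happens for some `N ≤ dim M_d = d²`.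
All three capacities of `Φ^n` depend on `Φ^n` only through `S_n`: outputs of pure states (with or
without an entangled reference system) are orthogonal iff `S_n` lies in the kernel of a linear
functional built from the inputs, and by the Knill–Laflamme criterion a subspace with orthogonal
projection `P` is correctable iff `P S P ∈ ℂ P` for all `S ∈ S_n`.
-/

theorem Submodule.exists_le_finrank_succ_eq_of_monotone {𝕜 V : Type*} [DivisionRing 𝕜]
    [AddCommGroup V] [Module 𝕜 V] [FiniteDimensional 𝕜 V] {f : ℕ → Submodule 𝕜 V}
    (hf : Monotone f) : ∃ n ≤ Module.finrank 𝕜 V, f (n + 1) = f n := by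
  by_contra! h
  have hgrow : ∀ n ≤ Module.finrank 𝕜 V + 1, n ≤ Module.finrank 𝕜 (f n) := by
    intro n
    induction n with
    | zero => simp
    | succ n ih =>
      intro hn
      have := Submodule.finrank_lt_finrank_of_lt
        ((hf (Nat.le_add_right n 1)).lt_of_ne (h n (by omega)).symm)
      have := ih (by omega)
      omega
  have := hgrow _ le_rfl
  have := Submodule.finrank_le (f (Module.finrank 𝕜 V + 1))
  omega

lemma Submodule.exists_isStarProjection_mem_iff {n : Type*} [Fintype n] [DecidableEq n]
    (C : Submodule ℂ (n → ℂ)) :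
    ∃ P : Matrix n n ℂ, IsStarProjection P ∧ ∀ x, x ∈ C ↔ P *ᵥ x = x := by
  let C' : Submodule ℂ (EuclideanSpace ℂ n) := C.comap (WithLp.linearEquiv 2 ℂ (n → ℂ)).toLinearMap
  let e := (toEuclideanCLM (n := n) (𝕜 := ℂ)).symm
  have hproj : IsStarProjection C'.starProjection := isStarProjection_starProjection
  refine ⟨e C'.starProjection, ⟨?_, ?_⟩, fun x => ?_⟩
  · rw [IsIdempotentElem, ← map_mul, hproj.isIdempotentElem.eq]
  · rw [IsSelfAdjoint, ← StarRingEquivClass.map_star e, hproj.isSelfAdjoint.star_eq]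
  rw [← (WithLp.toLp_injective 2).eq_iff, ← toEuclideanCLM_toLp, StarAlgEquiv.apply_symm_apply,
    Submodule.starProjection_eq_self_iff]
  rfl

lemma Submodule.exists_forall_mulVec_eq_smul {n : Type*} [Fintype n] {C : Submodule ℂ (n → ℂ)}
    {T : Matrix n n ℂ} (h : ∀ φ ∈ C, ∃ k : ℂ, T *ᵥ φ = k • φ) :
    ∃ k : ℂ, ∀ φ ∈ C, T *ᵥ φ = k • φ := by
  have hmaps : ∀ φ ∈ C, T.mulVecLin φ ∈ C := fun φ hφ => by
    obtain ⟨k, hk⟩ := h φ hφ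
    rw [mulVecLin_apply, hk]
    exact C.smul_mem k hφ
  obtain ⟨k, hk⟩ := (T.mulVecLin.restrict hmaps).exists_eq_smul_id_of_forall_notLinearIndependent
    fun v hli => by
      obtain ⟨k, hk⟩ := h v v.2
      have := LinearIndependent.pair_iff.mp hli k (-1) (by ext; simp [hk])
      exact one_ne_zero (neg_eq_zero.mp this.2)
  exact ⟨k, fun φ hφ => congrArg Subtype.val (LinearMap.congr_fun hk ⟨φ, hφ⟩)⟩

noncomputable def matrixCoeff {ι κ : Type*} [Fintype ι] [Fintype κ] (x : ι → ℂ) (y : κ → ℂ) :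
    Matrix ι κ ℂ →ₗ[ℂ] ℂ where
  toFun S := star x ⬝ᵥ S *ᵥ y
  map_add' S T := by simp [add_mulVec, dotProduct_add]
  map_smul' c S := by simp [smul_mulVec, dotProduct_smul]

lemma star_mulVec_dotProduct_mulVec {ι κ κ' : Type*} [Fintype ι] [Fintype κ] [Fintype κ']
    (A : Matrix ι κ ℂ) (B : Matrix ι κ' ℂ) (x : κ → ℂ) (y : κ' → ℂ) :
    star (A *ᵥ x) ⬝ᵥ B *ᵥ y = matrixCoeff x y (Aᴴ * B) := by
  rw [star_mulVec, ← dotProduct_mulVec, mulVec_mulVec]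
  rfl

section PureState

variable {n : Type*} [Fintype n]

lemma mul_vecMulVec_star_mul_conjTranspose {ι ι' : Type*} (M : Matrix ι n ℂ) (N : Matrix ι' n ℂ)
    (u v : n → ℂ) : M * vecMulVec u (star v) * Nᴴ = vecMulVec (M *ᵥ u) (star (N *ᵥ v)) := by
  rw [mul_vecMulVec, vecMulVec_mul, vecMul_conjTranspose, star_star]

lemma mul_pureState_mul_conjTranspose {ι : Type*} (M : Matrix ι n ℂ) (u : n → ℂ) :
    M * pureState u * Mᴴ = pureState (M *ᵥ u) :=
  mul_vecMulVec_star_mul_conjTranspose M M u u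

lemma trace_pureState_mul_pureState (u v : n → ℂ) :
    (pureState u * pureState v).trace = (star u ⬝ᵥ v) * star (star u ⬝ᵥ v) := by
  change (vecMulVec u (star u) * vecMulVec v (star v)).trace = _
  rw [vecMulVec_mul_vecMulVec, trace_vecMulVec, dotProduct_smul, dotProduct_star, smul_eq_mul,
    dotProduct_comm]

lemma trace_sum_pureState_mul_sum_pureState_eq_zero_iff {α β : Type*} [Fintype α] [Fintype β]
    (v : α → n → ℂ) (w : β → n → ℂ) :
    ((∑ a, pureState (v a)) * ∑ b, pureState (w b)).trace = 0 ↔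
      ∀ a b, star (v a) ⬝ᵥ w b = 0 := by
  simp_rw [Finset.sum_mul_sum, trace_sum, trace_pureState_mul_pureState]
  rw [← Finset.sum_product', Finset.sum_eq_zero_iff_of_nonneg fun _ _ => mul_star_self_nonneg _]
  simp

lemma exists_eq_smul_of_sum_pureState_eq {ι : Type*} [Fintype ι] {v : ι → n → ℂ} {ψ : n → ℂ}
    (h : ∑ t, pureState (v t) = pureState ψ) (hψ : ψ ≠ 0) (t : ι) : ∃ k : ℂ, v t = k • ψ := by
  set s := star ψ ⬝ᵥ ψ
  have hs : s ≠ 0 := dotProduct_star_self_eq_zero.not.mpr hψ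
  -- `w` is orthogonal to `ψ`, hence (by `h`) to every `v t'`, hence to itself.
  set w := s • v t - (star ψ ⬝ᵥ v t) • ψ
  have hψw : star ψ ⬝ᵥ w = 0 := by
    simp only [w, dotProduct_sub, dotProduct_smul, smul_eq_mul, s]
    ring
  have hvw : ∀ t', star (v t') ⬝ᵥ w = 0 := by
    have := (trace_sum_pureState_mul_sum_pureState_eq_zero_iff v fun _ : Unit => w).mp
      (by rw [h, Fintype.sum_unique, trace_pureState_mul_pureState, hψw, zero_mul])
    exact fun t' => this t' ()
  have hw : w = 0 := by
    refine dotProduct_star_self_eq_zero.mp ?_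
    simp only [w, star_sub, star_smul, sub_dotProduct, smul_dotProduct, hvw, hψw, smul_zero,
      sub_zero]
  refine ⟨s⁻¹ * (star ψ ⬝ᵥ v t), ?_⟩
  rw [mul_smul, ← sub_eq_zero.mp hw, smul_smul, inv_mul_cancel₀ hs, one_smul]

lemma isState_smul_pureState {m : ℕ} {φ : Fin m → ℂ} (hφ : φ ≠ 0) :
    IsState ((star φ ⬝ᵥ φ)⁻¹ • pureState φ) := by
  have hpos : 0 < star φ ⬝ᵥ φ := dotProduct_star_self_pos_iff.mpr hφ
  refine ⟨(posSemidef_vecMulVec_self_star φ).smul (inv_nonneg_of_nonneg hpos.le), ?_⟩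
  have htr : (pureState φ).trace = star φ ⬝ᵥ φ := by
    rw [pureState, ← vecMulVec, trace_vecMulVec, dotProduct_comm]
    rfl
  rw [trace_smul, htr, smul_eq_mul, inv_mul_cancel₀ hpos.ne']

lemma range_mulVecLin_smul_pureState_le {m : ℕ} {C : Submodule ℂ (Fin m → ℂ)} {φ : Fin m → ℂ}
    (hφ : φ ∈ C) (c : ℂ) : LinearMap.range (c • pureState φ).mulVecLin ≤ C := by
  rintro _ ⟨x, rfl⟩
  rw [mulVecLin_apply, smul_mulVec, pureState, ← vecMulVec, vecMulVec_mulVec, op_smul_eq_smul]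
  exact C.smul_mem _ (C.smul_mem _ hφ)

end PureState

section OperatorSystem

variable {d p : ℕ} (K : Fin p → Mat d)

lemma krausProd_cons {k : ℕ} (a : Fin p) (t : Fin k → Fin p) :
    krausProd K (Fin.cons a t) = K a * krausProd K t := by
  simp [krausProd, List.ofFn_succ]

lemma krausProd_snoc {k : ℕ} (t : Fin k → Fin p) (a : Fin p) :
    krausProd K (Fin.snoc t a) = krausProd K t * K a := by
  rw [krausProd, List.ofFn_succ', List.concat_eq_append, List.prod_append]
  simp [krausProd]

lemma sum_fin_succ_fun_eq_sum_cons {M : Type*} [AddCommMonoid M] {k : ℕ}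
    (f : (Fin (k + 1) → Fin p) → M) : ∑ i, f i = ∑ a, ∑ t : Fin k → Fin p, f (Fin.cons a t) := by
  rw [← (Fin.consEquiv fun _ => Fin p).sum_comp, Fintype.sum_prod_type]
  rfl

lemma pow_apply_eq_sum_krausProd {Φ : Module.End ℂ (Mat d)}
    (hK : ∀ X, Φ X = ∑ i, K i * X * (K i)ᴴ) (k : ℕ) (X : Mat d) :
    (Φ ^ k) X = ∑ i : Fin k → Fin p, krausProd K i * X * (krausProd K i)ᴴ := by
  induction k with
  | zero => simp [krausProd]
  | succ k ih =>
    simp_rw [pow_succ', Module.End.mul_apply, ih, hK, sum_fin_succ_fun_eq_sum_cons, krausProd_cons,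
      Finset.mul_sum, Finset.sum_mul, conjTranspose_mul, Matrix.mul_assoc]

lemma sum_krausProd_conjTranspose_mul_self (hK1 : ∑ i, (K i)ᴴ * K i = 1) (k : ℕ) :
    ∑ i : Fin k → Fin p, (krausProd K i)ᴴ * krausProd K i = 1 := by
  induction k with
  | zero => simp [krausProd]
  | succ k ih =>
    calc ∑ i : Fin (k + 1) → Fin p, (krausProd K i)ᴴ * krausProd K i
        = ∑ t : Fin k → Fin p, (krausProd K t)ᴴ * (∑ a, (K a)ᴴ * K a) * krausProd K t := by
          simp_rw [sum_fin_succ_fun_eq_sum_cons, krausProd_cons, Finset.mul_sum, Finset.sum_mul,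
            conjTranspose_mul, Matrix.mul_assoc]
          exact Finset.sum_comm
      _ = 1 := by simpa [hK1] using ih

lemma opSys_le_iff (k : ℕ) (W : Submodule ℂ (Mat d)) :
    opSys K k ≤ W ↔ ∀ i j : Fin k → Fin p, (krausProd K i)ᴴ * krausProd K j ∈ W := by
  refine Submodule.span_le.trans ⟨fun h i j => h ⟨i, j, rfl⟩, ?_⟩
  rintro h _ ⟨i, j, rfl⟩
  exact h i j

lemma opSys_le_succ (hK1 : ∑ i, (K i)ᴴ * K i = 1) (k : ℕ) : opSys K k ≤ opSys K (k + 1) := by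
  refine (opSys_le_iff K k _).mpr fun i j => ?_
  have hsplit : (krausProd K i)ᴴ * krausProd K j =
      ∑ a, (krausProd K (Fin.cons a i))ᴴ * krausProd K (Fin.cons a j) := by
    calc (krausProd K i)ᴴ * krausProd K j
        = (krausProd K i)ᴴ * (∑ a, (K a)ᴴ * K a) * krausProd K j := by rw [hK1, Matrix.mul_one]
      _ = _ := by
        simp [krausProd_cons, conjTranspose_mul, Finset.mul_sum, Finset.sum_mul, Matrix.mul_assoc]
  rw [hsplit]
  exact Submodule.sum_mem _ fun a _ => Submodule.subset_span ⟨_, _, rfl⟩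

lemma opSys_succ (k : ℕ) : opSys K (k + 1) =
    ⨆ ab : Fin p × Fin p, (opSys K k).map (LinearMap.mulLeftRight ℂ ((K ab.1)ᴴ, K ab.2)) := by
  have hgen : ∀ (i j : Fin k → Fin p) (a b : Fin p),
      (krausProd K (Fin.snoc i a))ᴴ * krausProd K (Fin.snoc j b) =
        LinearMap.mulLeftRight ℂ ((K a)ᴴ, K b) ((krausProd K i)ᴴ * krausProd K j) := by
    intro i j a b
    simp [krausProd_snoc, conjTranspose_mul, Matrix.mul_assoc]
  apply le_antisymm
  · refine (opSys_le_iff K _ _).mpr fun i j => ?_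
    rw [← Fin.snoc_init_self i, ← Fin.snoc_init_self j, hgen]
    exact Submodule.mem_iSup_of_mem (i (Fin.last k), j (Fin.last k))
      (Submodule.mem_map_of_mem (Submodule.subset_span ⟨_, _, rfl⟩))
  · refine iSup_le fun ⟨a, b⟩ => ?_
    rw [opSys, Submodule.map_span_le]
    rintro _ ⟨i, j, rfl⟩
    rw [← hgen]
    exact Submodule.subset_span ⟨_, _, rfl⟩

lemma opSys_add_eq_of_succ_eq {N : ℕ} (h : opSys K (N + 1) = opSys K N) (n : ℕ) :
    opSys K (N + n) = opSys K N := by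
  induction n with
  | zero => rfl
  | succ n ih => rw [← add_assoc, opSys_succ, ih, ← opSys_succ, h]

lemma exists_le_sq_opSys_succ_eq (hK1 : ∑ i, (K i)ᴴ * K i = 1) :
    ∃ N ≤ d ^ 2, opSys K (N + 1) = opSys K N := by
  have hdim : Module.finrank ℂ (Mat d) = d ^ 2 := by
    simp [Module.finrank_matrix, sq]
  simpa [hdim] using Submodule.exists_le_finrank_succ_eq_of_monotone
    (monotone_nat_of_le_succ (opSys_le_succ K hK1))

end OperatorSystem

section ZeroErrorCodes

variable {d p : ℕ} (K : Fin p → Mat d) {Φ : Module.End ℂ (Mat d)}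

lemma trace_pow_pureState_mul_eq_zero_iff (hK : ∀ X, Φ X = ∑ i, K i * X * (K i)ᴴ) (k : ℕ)
    (ψ φ : Fin d → ℂ) :
    ((Φ ^ k) (pureState ψ) * (Φ ^ k) (pureState φ)).trace = 0 ↔
      opSys K k ≤ LinearMap.ker (matrixCoeff ψ φ) := by
  simp_rw [pow_apply_eq_sum_krausProd K hK, mul_pureState_mul_conjTranspose,
    trace_sum_pureState_mul_sum_pureState_eq_zero_iff, star_mulVec_dotProduct_mulVec,
    opSys_le_iff, LinearMap.mem_ker]

lemma Mclassical_pow_eq_of_opSys_eq (hK : ∀ X, Φ X = ∑ i, K i * X * (K i)ᴴ) {N M : ℕ}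
    (h : opSys K N = opSys K M) : Mclassical (Φ ^ N) = Mclassical (Φ ^ M) := by
  simp only [Mclassical, trace_pow_pureState_mul_eq_zero_iff K hK, h]

lemma tensorId_pureState_eq_sum {d₀ n d₁ : ℕ} {Θ : Matrix (Fin d₀) (Fin d₀) ℂ →ₗ[ℂ] Mat n}
    {ι : Type*} [Fintype ι] (M : ι → Matrix (Fin n) (Fin d₀) ℂ)
    (hM : ∀ X, Θ X = ∑ a, M a * X * (M a)ᴴ) (ψ : Fin d₀ × Fin d₁ → ℂ) :
    tensorId Θ (pureState ψ) =
      ∑ a, pureState fun x : Fin n × Fin d₁ => (M a *ᵥ fun l => ψ (l, x.2)) x.1 := by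
  ext ⟨p₁, p₂⟩ ⟨q₁, q₂⟩
  change Θ (vecMulVec (fun l => ψ (l, p₂)) (star fun l => ψ (l, q₂))) p₁ q₁ = _
  simp [hM, mul_vecMulVec_star_mul_conjTranspose, Matrix.sum_apply, pureState, vecMulVec_apply]

lemma star_dotProduct_mulVec_slices {n d₀ d₁ : ℕ} (A B : Matrix (Fin n) (Fin d₀) ℂ)
    (ψ : Fin d₀ × Fin d₁ → ℂ) :
    star (fun x : Fin n × Fin d₁ => (A *ᵥ fun l => ψ (l, x.2)) x.1) ⬝ᵥ
        (fun x : Fin n × Fin d₁ => (B *ᵥ fun l => ψ (l, x.2)) x.1) =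
      ∑ x₂ : Fin d₁, star (A *ᵥ fun l => ψ (l, x₂)) ⬝ᵥ B *ᵥ fun l => ψ (l, x₂) := by
  rw [dotProduct, Fintype.sum_prod_type, Finset.sum_comm]
  rfl

lemma pow_comp_apply_eq_sum {d₀ q : ℕ} (hK : ∀ X, Φ X = ∑ i, K i * X * (K i)ᴴ)
    {E : Matrix (Fin d₀) (Fin d₀) ℂ →ₗ[ℂ] Mat d} {F : Fin q → Matrix (Fin d) (Fin d₀) ℂ}
    (hF : ∀ X, E X = ∑ c, F c * X * (F c)ᴴ) (k : ℕ) (X : Matrix (Fin d₀) (Fin d₀) ℂ) :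
    ((Φ ^ k) ∘ₗ E) X = ∑ ic : (Fin k → Fin p) × Fin q,
      (krausProd K ic.1 * F ic.2) * X * (krausProd K ic.1 * F ic.2)ᴴ := by
  simp [pow_apply_eq_sum_krausProd K hK, hF, Fintype.sum_prod_type, Finset.mul_sum,
    Finset.sum_mul, conjTranspose_mul, Matrix.mul_assoc]

lemma trace_tensorId_pow_comp_mul_eq_zero_iff {d₀ d₁ q q' : ℕ}
    (hK : ∀ X, Φ X = ∑ i, K i * X * (K i)ᴴ) {E E' : Matrix (Fin d₀) (Fin d₀) ℂ →ₗ[ℂ] Mat d}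
    {F : Fin q → Matrix (Fin d) (Fin d₀) ℂ} (hF : ∀ X, E X = ∑ c, F c * X * (F c)ᴴ)
    {G : Fin q' → Matrix (Fin d) (Fin d₀) ℂ} (hG : ∀ X, E' X = ∑ c, G c * X * (G c)ᴴ)
    (k : ℕ) (ψ : Fin d₀ × Fin d₁ → ℂ) :
    (tensorId ((Φ ^ k) ∘ₗ E) (pureState ψ) * tensorId ((Φ ^ k) ∘ₗ E') (pureState ψ)).trace = 0 ↔
      ∀ c e, opSys K k ≤ LinearMap.ker
        (∑ x₂ : Fin d₁, matrixCoeff (F c *ᵥ fun l => ψ (l, x₂)) (G e *ᵥ fun l => ψ (l, x₂))) := by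
  rw [tensorId_pureState_eq_sum _ (pow_comp_apply_eq_sum K hK hF k),
    tensorId_pureState_eq_sum _ (pow_comp_apply_eq_sum K hK hG k),
    trace_sum_pureState_mul_sum_pureState_eq_zero_iff]
  simp_rw [star_dotProduct_mulVec_slices, ← mulVec_mulVec, star_mulVec_dotProduct_mulVec,
    opSys_le_iff, LinearMap.mem_ker, LinearMap.sum_apply, Prod.forall]
  exact ⟨fun h c e i j => h i c j e, fun h i c j e => h c e i j⟩

lemma MEclassical_pow_eq_of_opSys_eq (hK : ∀ X, Φ X = ∑ i, K i * X * (K i)ᴴ) {N M : ℕ}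
    (h : opSys K N = opSys K M) : MEclassical (Φ ^ N) = MEclassical (Φ ^ M) := by
  have hcode : ∀ {d₀ d₁ : ℕ} {E E' : Matrix (Fin d₀) (Fin d₀) ℂ →ₗ[ℂ] Mat d},
      IsChannel E → IsChannel E' → ∀ ψ : Fin d₀ × Fin d₁ → ℂ,
      (tensorId ((Φ ^ N) ∘ₗ E) (pureState ψ) * tensorId ((Φ ^ N) ∘ₗ E') (pureState ψ)).trace = 0 ↔
        (tensorId ((Φ ^ M) ∘ₗ E) (pureState ψ) *
          tensorId ((Φ ^ M) ∘ₗ E') (pureState ψ)).trace = 0 := by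
    rintro d₀ d₁ E E' ⟨q, F, hF, -⟩ ⟨q', G, hG, -⟩ ψ
    simp only [trace_tensorId_pow_comp_mul_eq_zero_iff K hK hF hG, h]
  refine congrArg sSup (Set.ext fun m₀ => ?_)
  exact exists₃_congr fun d₀ d₁ ψ => and_congr_right fun _ => and_congr_right fun _ =>
    and_congr_right fun _ => exists_congr fun E => and_congr_right fun hE =>
      forall₃_congr fun m m' _ => hcode (hE m) (hE m') ψ

end ZeroErrorCodes

lemma isStarProjection_sum_mul_star {R ι : Type*} [Ring R] [StarRing R] [Fintype ι]
    {W : ι → R} (h : ∀ a, (∑ b, W b * star (W b)) * W a = W a) :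
    IsStarProjection (∑ a, W a * star (W a)) := by
  refine ⟨?_, isSelfAdjoint_sum _ fun a _ => IsSelfAdjoint.mul_star_self (W a)⟩
  rw [IsIdempotentElem]
  nth_rewrite 2 [Finset.sum_congr rfl fun a _ => rfl]
  rw [Finset.mul_sum]
  simp_rw [← mul_assoc, h]

section Compression

variable {n ι : Type*} [Fintype n] [Fintype ι] {P : Matrix n n ℂ}

lemma mul_mul_eq_self_of_range_le [DecidableEq n] (hP : IsStarProjection P)
    {C : Submodule ℂ (n → ℂ)} (hPC : ∀ x, x ∈ C ↔ P *ᵥ x = x) {ρ : Matrix n n ℂ}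
    (hρ : ρ.IsHermitian) (hρC : LinearMap.range ρ.mulVecLin ≤ C) : P * ρ * P = ρ := by
  have hPρ : P * ρ = ρ := ext_of_mulVec_single fun i => by
    rw [← mulVec_mulVec]
    exact (hPC _).mp (hρC ⟨_, rfl⟩)
  have hρP : ρ * P = ρ := by
    have hPH : Pᴴ = P := hP.isSelfAdjoint.star_eq
    simpa [conjTranspose_mul, hρ.eq, hPH] using congrArg conjTranspose hPρ
  rw [hPρ, hρP]

lemma mul_eq_zero_of_compression_eq_zero {k : Type*} [Fintype k] (hP : IsStarProjection P)
    {A : Matrix k n ℂ} (h : P * (Aᴴ * A) * P = 0) : A * P = 0 := by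
  have hPH : Pᴴ = P := hP.isSelfAdjoint.star_eq
  exact conjTranspose_mul_self_eq_zero.mp
    (by simpa [conjTranspose_mul, hPH, Matrix.mul_assoc] using h)

lemma posSemidef_of_compression_eq_smul (hP : IsStarProjection P) (hP0 : P ≠ 0)
    (L : ι → Matrix n n ℂ) {μ : Matrix ι ι ℂ} (hμ : ∀ a b, P * ((L a)ᴴ * L b) * P = μ a b • P) :
    μ.PosSemidef := by
  have hPP : P * P = P := hP.isIdempotentElem.eq
  have hPH : Pᴴ = P := hP.isSelfAdjoint.star_eq
  -- Up to the factor `tr P > 0`, `μ` is the Gram matrix of the `L a * P` for the trace form.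
  let B : Matrix (n × n) ι ℂ := of fun x a => (L a * P) x.1 x.2
  have hB : Bᴴ * B = P.trace • μ := by
    ext a b
    have hgram : (Bᴴ * B) a b = ((L a * P)ᴴ * (L b * P)).trace := by
      simp only [B, mul_apply, trace, diag, conjTranspose_apply, of_apply, Fintype.sum_prod_type]
      exact Finset.sum_comm
    rw [hgram, conjTranspose_mul, hPH, ← Matrix.mul_assoc, Matrix.mul_assoc P, hμ, trace_smul,
      Matrix.smul_apply, smul_eq_mul, smul_eq_mul, mul_comm]
  have htr : 0 < P.trace := by
    have hPsd : P.PosSemidef := by simpa [hPH, hPP] using posSemidef_conjTranspose_mul_self P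
    exact hPsd.trace_nonneg.lt_of_ne (Ne.symm (hPsd.trace_eq_zero_iff.not.mpr hP0))
  have hμB : μ = P.trace⁻¹ • (Bᴴ * B) := by rw [hB, smul_smul, inv_mul_cancel₀ htr.ne', one_smul]
  rw [hμB]
  exact (posSemidef_conjTranspose_mul_self B).smul (inv_nonneg_of_nonneg htr.le)

lemma compression_mix_eq {L : ι → Matrix n n ℂ} {μ : Matrix ι ι ℂ}
    (hμ : ∀ a b, P * ((L a)ᴴ * L b) * P = μ a b • P) (V : Matrix ι ι ℂ) (a b : ι) :
    P * ((∑ c, V c a • L c)ᴴ * ∑ c, V c b • L c) * P = (Vᴴ * μ * V) a b • P := by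
  simp only [conjTranspose_sum, conjTranspose_smul, Finset.mul_sum,
    Finset.sum_mul, Matrix.smul_mul, Matrix.mul_smul, hμ, smul_smul, mul_apply,
    conjTranspose_apply, Finset.sum_smul]
  exact Finset.sum_congr rfl fun c _ => Finset.sum_congr rfl fun e _ => by ring_nf

lemma sum_mix_mul_mul_conjTranspose {ι k l : Type*} [Fintype ι] [DecidableEq ι] [Fintype l]
    {V : Matrix ι ι ℂ} (hV : V * Vᴴ = 1) (A : ι → Matrix k l ℂ) (X : Matrix l l ℂ) :
    ∑ a, (∑ c, V c a • A c) * X * (∑ c, V c a • A c)ᴴ = ∑ c, A c * X * (A c)ᴴ := by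
  have hδ : ∀ c e, ∑ a, V c a * star (V e a) = if c = e then 1 else 0 := fun c e => by
    rw [← one_apply, ← hV, mul_apply]
    rfl
  have hexp : ∀ a, (∑ c, V c a • A c) * X * (∑ c, V c a • A c)ᴴ =
      ∑ c, ∑ e, (V c a * star (V e a)) • (A c * X * (A e)ᴴ) := fun a => by
    simp only [conjTranspose_sum, conjTranspose_smul, Matrix.sum_mul, Matrix.mul_sum,
      Matrix.smul_mul, Matrix.mul_smul, Finset.smul_sum, smul_smul]
    rw [Finset.sum_comm]
    simp_rw [mul_comm (star _)]
  simp_rw [hexp]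
  rw [Finset.sum_comm]
  refine Finset.sum_congr rfl fun c _ => ?_
  rw [Finset.sum_comm]
  simp_rw [← Finset.sum_smul, hδ]
  simp

end Compression

noncomputable def krausMap {m n : ℕ} {ι : Type*} [Fintype ι] (G : ι → Matrix (Fin n) (Fin m) ℂ) :
    Matrix (Fin m) (Fin m) ℂ →ₗ[ℂ] Mat n where
  toFun X := ∑ i, G i * X * (G i)ᴴ
  map_add' X Y := by simp [Matrix.mul_add, Matrix.add_mul, Finset.sum_add_distrib]
  map_smul' c X := by simp [Finset.smul_sum]

lemma isChannel_krausMap {m n : ℕ} {ι : Type*} [Fintype ι] {G : ι → Matrix (Fin n) (Fin m) ℂ}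
    (hG : ∑ i, (G i)ᴴ * G i = 1) : IsChannel (krausMap G) := by
  refine ⟨Fintype.card ι, fun j => G ((Fintype.equivFin ι).symm j), fun X => ?_, ?_⟩
  · exact ((Fintype.equivFin ι).symm.sum_comp fun i => G i * X * (G i)ᴴ).symm
  · rw [← hG]
    exact (Fintype.equivFin ι).symm.sum_comp fun i => (G i)ᴴ * G i

section KnillLaflamme

variable {m : ℕ} {ι : Type*} [Fintype ι] {P : Mat m}

lemma compression_mem_span_of_correctable
    {Φ : Mat m →ₗ[ℂ] Mat m} {L : ι → Mat m} (hL : ∀ X, Φ X = ∑ a, L a * X * (L a)ᴴ)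
    {C : Submodule ℂ (Fin m → ℂ)} (hP : IsStarProjection P)
    (hPC : ∀ x, x ∈ C ↔ P *ᵥ x = x) (hC : Correctable Φ C) (a b : ι) :
    P * ((L a)ᴴ * L b) * P ∈ ℂ ∙ P := by
  obtain ⟨R, ⟨q, Rk, hR, hR1⟩, hrec⟩ := hC
  -- Recovering the pure state of `φ` forces every branch `Rk c * L a *ᵥ φ` to be parallel to `φ`.
  have hscalar : ∀ c a, ∀ φ ∈ C, ∃ k : ℂ, (Rk c * L a) *ᵥ φ = k • φ := by
    intro c a φ hφ
    rcases eq_or_ne φ 0 with rfl | hφ0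
    · exact ⟨0, by simp⟩
    have hrecφ : R (Φ (pureState φ)) = pureState φ := by
      have := hrec _ (isState_smul_pureState hφ0) (range_mulVecLin_smul_pureState_le hφ _)
      rw [map_smul, map_smul] at this
      exact smul_right_injective _ (inv_ne_zero (dotProduct_star_self_eq_zero.not.mpr hφ0)) this
    have hsum : ∑ ca : Fin q × ι, pureState ((Rk ca.1 * L ca.2) *ᵥ φ) = pureState φ := by
      rw [← hrecφ, hL, hR, Fintype.sum_prod_type]
      simp_rw [Finset.mul_sum, Finset.sum_mul, ← mulVec_mulVec, ← mul_pureState_mul_conjTranspose]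
    exact exists_eq_smul_of_sum_pureState_eq hsum hφ0 (c, a)
  choose k hk using fun c a => Submodule.exists_forall_mulVec_eq_smul (hscalar c a)
  have hPP : P * P = P := hP.isIdempotentElem.eq
  have hPH : Pᴴ = P := hP.isSelfAdjoint.star_eq
  have hRLP : ∀ c a, Rk c * L a * P = k c a • P := fun c a => ext_of_mulVec_single fun i => by
    rw [← mulVec_mulVec, hk c a _ ((hPC _).mpr (by rw [mulVec_mulVec, hPP])), smul_mulVec]
  refine Submodule.mem_span_singleton.mpr ⟨∑ c, star (k c a) * k c b, ?_⟩
  calc (∑ c, star (k c a) * k c b) • P = ∑ c, (Rk c * L a * P)ᴴ * (Rk c * L b * P) := by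
        simp [hRLP, Finset.sum_smul, hPH, hPP, smul_smul, mul_comm]
    _ = P * ((L a)ᴴ * (∑ c, (Rk c)ᴴ * Rk c) * L b) * P := by
        simp [Finset.mul_sum, Finset.sum_mul, conjTranspose_mul, hPH, Matrix.mul_assoc]
    _ = P * ((L a)ᴴ * L b) * P := by rw [hR1, Matrix.mul_one]

lemma correctable_of_mul_kraus_mul_eq_smul {γ : Type*} [Fintype γ] {Φ : Mat m →ₗ[ℂ] Mat m}
    {L : ι → Mat m} (hL : ∀ X, Φ X = ∑ c, L c * X * (L c)ᴴ) (hP : IsStarProjection P)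
    {C : Submodule ℂ (Fin m → ℂ)} (hPC : ∀ x, x ∈ C ↔ P *ᵥ x = x) {G : γ → Mat m}
    (hG : ∑ g, (G g)ᴴ * G g = 1) {κ : γ → ι → ℂ} (hGL : ∀ g c, G g * (L c * P) = κ g c • P)
    (hκ : ∑ g, ∑ c, κ g c * star (κ g c) = 1) : Correctable Φ C := by
  refine ⟨krausMap G, isChannel_krausMap hG, fun ρ hρ hρC => ?_⟩
  have hPρP := mul_mul_eq_self_of_range_le hP hPC hρ.1.isHermitian hρC
  have hPH : Pᴴ = P := hP.isSelfAdjoint.star_eq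
  have hΦρ : Φ ρ = ∑ c, (L c * P) * ρ * (L c * P)ᴴ := by
    calc Φ ρ = Φ (P * ρ * P) := by rw [hPρP]
      _ = _ := by simp [hL, conjTranspose_mul, hPH, Matrix.mul_assoc]
  change ∑ g, G g * Φ ρ * (G g)ᴴ = ρ
  simp_rw [hΦρ, Finset.mul_sum, Finset.sum_mul]
  calc ∑ g, ∑ c, G g * (L c * P * ρ * (L c * P)ᴴ) * (G g)ᴴ
      = ∑ g, ∑ c, (G g * (L c * P)) * ρ * (G g * (L c * P))ᴴ := by
        simp [conjTranspose_mul, Matrix.mul_assoc]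
    _ = ∑ g, ∑ c, (κ g c * star (κ g c)) • ρ := by
        simp only [hGL, conjTranspose_smul, hPH, Matrix.smul_mul, Matrix.mul_smul, smul_smul,
          hPρP, mul_comm (star _)]
    _ = ρ := by simp_rw [← Finset.sum_smul, hκ, one_smul]

lemma exists_kraus_mul_eq_smul_of_compression_eq_diagonal [DecidableEq ι] {L : ι → Mat m}
    (hP : IsStarProjection P) {D : ι → ℝ} (hD0 : ∀ a, 0 ≤ D a)
    (hLP : ∀ a b, P * ((L a)ᴴ * L b) * P = (if a = b then (D a : ℂ) else 0) • P) :
    ∃ G : ι ⊕ Unit → Mat m, ∑ g, (G g)ᴴ * G g = 1 ∧ ∀ g c, G g * (L c * P) =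
      Sum.elim (fun a c => if a = c then (√(D a) : ℂ) else 0) (fun _ _ => 0) g c • P := by
  have hPP : P * P = P := hP.isIdempotentElem.eq
  have hPH : Pᴴ = P := hP.isSelfAdjoint.star_eq
  -- `W a` rescales `L a * P` to a partial isometry with initial projection `P` (or to `0`); the
  -- Kraus operators are the `(W a)ᴴ`, completed by the projection `1 - Q` onto the rest.
  set W : ι → Mat m := fun a => (((√(D a))⁻¹ : ℝ) : ℂ) • (L a * P) with hW
  have hWL : ∀ a c, (W a)ᴴ * (L c * P) = (if a = c then (√(D a) : ℂ) else 0) • P := by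
    intro a c
    calc (W a)ᴴ * (L c * P) = (((√(D a))⁻¹ : ℝ) : ℂ) • (P * ((L a)ᴴ * L c) * P) := by
          simp [W, conjTranspose_mul, hPH, Matrix.mul_assoc]
      _ = _ := by
          rw [hLP, smul_smul]
          split_ifs with h
          · congr 1
            exact_mod_cast (by rw [← div_eq_inv_mul, Real.div_sqrt] : (√(D a))⁻¹ * D a = √(D a))
          · simp
  have hLW : ∀ c, L c * P = (√(D c) : ℂ) • W c := by
    intro c
    rcases (hD0 c).eq_or_lt with h | h
    · rw [mul_eq_zero_of_compression_eq_zero hP (by simpa [← h] using hLP c c)]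
      simp [← h]
    · rw [hW, smul_smul, ← Complex.ofReal_mul, mul_inv_cancel₀ (Real.sqrt_pos.mpr h).ne',
        Complex.ofReal_one, one_smul]
  set Q := ∑ a, W a * (W a)ᴴ
  have hQL : ∀ c, Q * (L c * P) = L c * P := by
    intro c
    calc Q * (L c * P) = ∑ a, W a * ((W a)ᴴ * (L c * P)) := by
          simp [Q, Finset.sum_mul, Matrix.mul_assoc]
      _ = (√(D c) : ℂ) • (W c * P) := by simp [hWL]
      _ = L c * P := by rw [hLW c, hW, Matrix.smul_mul, Matrix.mul_assoc, hPP]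
  have hQW : ∀ a, Q * W a = W a := fun a => by simp only [hW, Matrix.mul_smul, hQL]
  have hQ : IsStarProjection Q := isStarProjection_sum_mul_star hQW
  refine ⟨Sum.elim (fun a => (W a)ᴴ) fun _ => 1 - Q, ?_, ?_⟩
  · have h1Q : (1 - Q)ᴴ * (1 - Q) = 1 - Q := by
      rw [show (1 - Q)ᴴ = 1 - Q from hQ.one_sub.isSelfAdjoint.star_eq,
        hQ.one_sub.isIdempotentElem.eq]
    rw [Fintype.sum_sum_type]
    simp only [Sum.elim_inl, Sum.elim_inr, conjTranspose_conjTranspose, h1Q, Finset.univ_unique,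
      Finset.sum_singleton]
    exact add_sub_cancel Q 1
  · rintro (a | _) c
    · exact hWL a c
    · simp [Matrix.sub_mul, hQL]

lemma correctable_of_compression_eq_diagonal [DecidableEq ι] {Φ : Mat m →ₗ[ℂ] Mat m}
    {L : ι → Mat m} (hL : ∀ X, Φ X = ∑ c, L c * X * (L c)ᴴ) (hP : IsStarProjection P)
    {C : Submodule ℂ (Fin m → ℂ)} (hPC : ∀ x, x ∈ C ↔ P *ᵥ x = x) {D : ι → ℝ}
    (hD0 : ∀ a, 0 ≤ D a) (hD1 : ∑ a, D a = 1)
    (hLP : ∀ a b, P * ((L a)ᴴ * L b) * P = (if a = b then (D a : ℂ) else 0) • P) :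
    Correctable Φ C := by
  obtain ⟨G, hG, hGL⟩ := exists_kraus_mul_eq_smul_of_compression_eq_diagonal hP hD0 hLP
  refine correctable_of_mul_kraus_mul_eq_smul hL hP hPC hG hGL ?_
  simp [Fintype.sum_sum_type, ← Complex.ofReal_mul, Real.mul_self_sqrt (hD0 _)]
  exact_mod_cast hD1

lemma correctable_of_compression_mem_span [DecidableEq ι] {Φ : Mat m →ₗ[ℂ] Mat m}
    {L : ι → Mat m} (hL : ∀ X, Φ X = ∑ c, L c * X * (L c)ᴴ) (hL1 : ∑ c, (L c)ᴴ * L c = 1)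
    (hP : IsStarProjection P) (hP0 : P ≠ 0) {C : Submodule ℂ (Fin m → ℂ)}
    (hPC : ∀ x, x ∈ C ↔ P *ᵥ x = x) (hKL : ∀ a b, P * ((L a)ᴴ * L b) * P ∈ ℂ ∙ P) :
    Correctable Φ C := by
  choose μ hμ using fun a b => Submodule.mem_span_singleton.mp (hKL a b)
  have hμ' : ∀ a b, P * ((L a)ᴴ * L b) * P = of μ a b • P := fun a b => (hμ a b).symm
  have hμpsd := posSemidef_of_compression_eq_smul hP hP0 L hμ'
  -- Mixing the Kraus operators by the unitary that diagonalises `μ` gives the orthogonal case.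
  have hdiag := hμpsd.isHermitian.conjStarAlgAut_star_eigenvectorUnitary
  rw [Unitary.conjStarAlgAut_star_apply] at hdiag
  set U : Matrix ι ι ℂ := (hμpsd.isHermitian.eigenvectorUnitary : Matrix ι ι ℂ)
  set D := hμpsd.isHermitian.eigenvalues
  have hUU : U * star U = 1 := Unitary.coe_mul_star_self _
  have hD1 : ∑ a, D a = 1 := by
    have htrμ : ∑ a, μ a a = 1 := by
      have h : (∑ a, μ a a) • P = (1 : ℂ) • P := by
        simp_rw [Finset.sum_smul, hμ, one_smul, ← Finset.sum_mul, ← Finset.mul_sum, hL1,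
          Matrix.mul_one, hP.isIdempotentElem.eq]
      exact smul_left_injective ℂ hP0 h
    have htr := congrArg trace hdiag
    rw [trace_mul_cycle, hUU, Matrix.one_mul, trace_diagonal] at htr
    simp only [Function.comp_apply, RCLike.ofReal_eq_complex_ofReal] at htr
    exact_mod_cast htr.symm.trans htrμ
  refine correctable_of_compression_eq_diagonal (L := fun a => ∑ c, U c a • L c) ?_ hP hPC
    hμpsd.eigenvalues_nonneg hD1 fun a b => ?_
  · intro X
    rw [hL, sum_mix_mul_mul_conjTranspose hUU]
  · rw [compression_mix_eq hμ', show Uᴴ * of μ * U = _ from hdiag, diagonal_apply]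
    rfl

/-- The Knill–Laflamme criterion. -/
theorem correctable_iff_compression_mem_span [DecidableEq ι] {Φ : Mat m →ₗ[ℂ] Mat m}
    {L : ι → Mat m} (hL : ∀ X, Φ X = ∑ c, L c * X * (L c)ᴴ) (hL1 : ∑ c, (L c)ᴴ * L c = 1)
    (hP : IsStarProjection P) {C : Submodule ℂ (Fin m → ℂ)} (hPC : ∀ x, x ∈ C ↔ P *ᵥ x = x) :
    Correctable Φ C ↔ ∀ a b, P * ((L a)ᴴ * L b) * P ∈ ℂ ∙ P := by
  refine ⟨compression_mem_span_of_correctable hL hP hPC, fun hKL => ?_⟩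
  rcases eq_or_ne P 0 with rfl | hP0
  · refine ⟨krausMap fun _ : Unit => 1, isChannel_krausMap (by simp), fun ρ hρ hρC => ?_⟩
    have hρ0 : ρ = 0 := by
      rw [← mul_mul_eq_self_of_range_le hP hPC hρ.1.isHermitian hρC]
      simp
    exact absurd hρ.2 (by simp [hρ0])
  · exact correctable_of_compression_mem_span hL hL1 hP hP0 hPC hKL

end KnillLaflamme

section Correction

variable {d p : ℕ} (K : Fin p → Mat d) {Φ : Module.End ℂ (Mat d)}

lemma correctable_pow_iff (hK : ∀ X, Φ X = ∑ i, K i * X * (K i)ᴴ)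
    (hK1 : ∑ i, (K i)ᴴ * K i = 1) {P : Mat d} (hP : IsStarProjection P)
    {C : Submodule ℂ (Fin d → ℂ)} (hPC : ∀ x, x ∈ C ↔ P *ᵥ x = x) (k : ℕ) :
    Correctable (Φ ^ k) C ↔ opSys K k ≤ (ℂ ∙ P).comap (LinearMap.mulLeftRight ℂ (P, P)) := by
  rw [correctable_iff_compression_mem_span (pow_apply_eq_sum_krausProd K hK k)
    (sum_krausProd_conjTranspose_mul_self K hK1 k) hP hPC, opSys_le_iff]
  rfl

lemma Dquantum_pow_eq_of_opSys_eq (hK : ∀ X, Φ X = ∑ i, K i * X * (K i)ᴴ)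
    (hK1 : ∑ i, (K i)ᴴ * K i = 1) {N M : ℕ} (h : opSys K N = opSys K M) :
    Dquantum (Φ ^ N) = Dquantum (Φ ^ M) := by
  have hC : ∀ C, Correctable (Φ ^ N) C ↔ Correctable (Φ ^ M) C := fun C => by
    obtain ⟨P, hP, hPC⟩ := C.exists_isStarProjection_mem_iff
    rw [correctable_pow_iff K hK hK1 hP hPC, correctable_pow_iff K hK hK1 hP hPC, h]
  simp only [Dquantum, hC]

end Correction

/-- The one-shot zero-error classical, quantum, and entanglement-assisted
classical capacities of the powers of a channel stabilize after at most `d ^ 2` iterations. -/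
theorem capacities_stabilize (d : ℕ) (Φ : Module.End ℂ (Mat d)) (hΦ : IsChannel Φ) :
    ∃ N : ℕ, N ≤ d ^ 2 ∧ ∀ n : ℕ,
      Mclassical (Φ ^ N) = Mclassical (Φ ^ (N + n)) ∧
      Dquantum (Φ ^ N) = Dquantum (Φ ^ (N + n)) ∧
      MEclassical (Φ ^ N) = MEclassical (Φ ^ (N + n)) := by
  obtain ⟨p, K, hK, hK1⟩ := hΦ
  obtain ⟨N, hN, hstab⟩ := exists_le_sq_opSys_succ_eq K hK1
  refine ⟨N, hN, fun n => ?_⟩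
  have h := (opSys_add_eq_of_succ_eq K hstab n).symm
  exact ⟨Mclassical_pow_eq_of_opSys_eq K hK h, Dquantum_pow_eq_of_opSys_eq K hK hK1 h,
    MEclassical_pow_eq_of_opSys_eq K hK h⟩
end

section
/- For d ≥ 2, let A_d ∈ M_d(ℝ) be the column stochastic matrix with entries (A_d)_{d,1} = 1, (A_d)_{1,2} = (A_d)_{d,2} = 1/2, (A_d)_{j-1,j} = 1 for 3 ≤ j ≤ d, and all other entries 0. Then the classical channel Φ_{A_d} on M_d(ℂ) satisfies c(Φ_{A_d}) = ⌈(d² − 2d + 2)/2⌉. In particular, there exists a quantum channel Φ on M_d(ℂ) whose classical scrambling time equals ⌈(d² − 2d + 2)/2⌉. -/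
open Matrix Filter
open scoped ComplexOrder

/-!
The support graph of `A_d` (an edge `j → i` whenever `A_d i j > 0`) is the `d`-cycle
`d-1 → d-2 → ⋯ → 1 → 0 → d-1` together with the chord `1 → d-1`, which closes a cycle of
length `d - 1`. Since `Φ_A^k = Φ_{A^k}` and `Tr(Φ_A(ψ) Φ_A(φ))` is the inner product of the
output distributions `A |ψ|²` and `A |φ|²`, the channel `Φ_A^k` is c-scrambling exactly when
any two columns of `A^k` share a positive row, i.e. when any two vertices are joined to a
common vertex by walks of length `k`.

A walk of length `n` from `x` that uses the chord `c` times ends at `z ≡ x - n - c (mod d)`,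
and such a walk exists iff `c = 0` or there is time to descend to vertex `1`, run the short
cycle `c - 1` times and take the chord once more: `dist(x, 1) + (c - 1)(d - 1) < n`. Two
walks of the same length from `x` and `x'` can only meet if their chord counts differ by the
cyclic offset `δ` of `x` and `x'`; the cheapest options are `δ` chords for one walk or `d - δ`
for the other, and balancing the two costs shows that `⌊((d - 1)² + 2) / 2⌋` steps always
suffice, while the vertices `0` and `d - ⌊d/2⌋` need that many.
-/

lemma Matrix.mul_apply_pos_iff {l m n : Type*} [Fintype m] {A : Matrix l m ℝ}
    {B : Matrix m n ℝ} (hA : ∀ i j, 0 ≤ A i j) (hB : ∀ i j, 0 ≤ B i j) {i : l} {j : n} :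
    0 < (A * B) i j ↔ ∃ k, 0 < A i k ∧ 0 < B k j := by
  rw [mul_apply, Finset.sum_pos_iff_of_nonneg fun k _ => mul_nonneg (hA i k) (hB k j)]
  simp only [Finset.mem_univ, true_and]
  exact exists_congr fun k =>
    ⟨fun h => ⟨pos_of_mul_pos_left h (hB k j), pos_of_mul_pos_right h (hA i k)⟩,
      fun h => mul_pos h.1 h.2⟩

lemma Matrix.pow_add_apply_pos {n : Type*} [Fintype n] [DecidableEq n] {A : Matrix n n ℝ}
    (hA : ∀ i j, 0 ≤ A i j) {a b : ℕ} {i j k : n} (h₁ : 0 < (A ^ a) i j)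
    (h₂ : 0 < (A ^ b) j k) : 0 < (A ^ (a + b)) i k := by
  rw [pow_add]
  exact (mul_apply_pos_iff (pow_apply_nonneg hA a) (pow_apply_nonneg hA b)).mpr ⟨j, h₁, h₂⟩

lemma ZMod.natCast_pred_self {d : ℕ} (hd : 1 ≤ d) : ((d - 1 : ℕ) : ZMod d) = -1 := by
  rw [Nat.cast_sub hd, ZMod.natCast_self, Nat.cast_one, zero_sub]

lemma ZMod.natCast_eq_of_eq_add_mul {d a b k : ℕ} (h : a = b + k * d) : (a : ZMod d) = b := by
  simp [h]

lemma ZMod.le_of_natCast_eq {d a b : ℕ} (ha : a < d) (h : (a : ZMod d) = b) : a ≤ b := by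
  have h := congrArg ZMod.val h
  rw [ZMod.val_cast_of_lt ha, ZMod.val_natCast] at h
  exact h ▸ Nat.mod_le b d

lemma Fin.eq_of_natCast_zmod_eq {d : ℕ} {z w : Fin d} (h : ((z : ℕ) : ZMod d) = (w : ℕ)) :
    z = w := by
  have h := congrArg ZMod.val h
  rwa [ZMod.val_cast_of_lt z.isLt, ZMod.val_cast_of_lt w.isLt, ← Fin.ext_iff] at h

namespace ColumnStochastic

variable {d : ℕ} {M : Matrix (Fin d) (Fin d) ℝ}

lemma mem_colStochastic (hM : ColumnStochastic M) : M ∈ colStochastic ℝ (Fin d) :=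
  mem_colStochastic_iff_sum.mpr hM

lemma pow (hM : ColumnStochastic M) (k : ℕ) : ColumnStochastic (M ^ k) :=
  mem_colStochastic_iff_sum.mp (Submonoid.pow_mem _ hM.mem_colStochastic k)

lemma exists_pos (hM : ColumnStochastic M) (j : Fin d) : ∃ i, 0 < M i j := by
  by_contra! h
  have : ∑ i, M i j = 0 := Finset.sum_eq_zero fun i _ => le_antisymm (h i) (hM.1 i j)
  simp [hM.2 j] at this

end ColumnStochastic

lemma isChannel_of_kraus {ι : Type*} [Fintype ι] {m n : ℕ}
    {Φ : Matrix (Fin m) (Fin m) ℂ →ₗ[ℂ] Mat n} (K : ι → Matrix (Fin n) (Fin m) ℂ)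
    (hΦ : ∀ X, Φ X = ∑ i, K i * X * (K i)ᴴ) (hK : ∑ i, (K i)ᴴ * K i = 1) : IsChannel Φ := by
  let e := Fintype.equivFin ι
  refine ⟨Fintype.card ι, K ∘ e.symm, fun X => ?_, ?_⟩
  · rw [hΦ]
    exact (e.symm.sum_comp fun i => K i * X * (K i)ᴴ).symm
  · rw [← hK]
    exact e.symm.sum_comp fun i => (K i)ᴴ * K i

section classicalChannel

variable {d : ℕ}

lemma classicalChannel_apply (M : Matrix (Fin d) (Fin d) ℝ) (X : Mat d) :
    classicalChannel M X = diagonal (M.map (↑) *ᵥ X.diag) := by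
  ext i j
  by_cases h : i = j
  · subst h
    simp [classicalChannel, cducMap, mulVec, dotProduct]
  · simp [classicalChannel, cducMap, h]

lemma classicalChannel_mul (M N : Matrix (Fin d) (Fin d) ℝ) :
    classicalChannel M * classicalChannel N = classicalChannel (M * N) := by
  ext1 X
  have hmap : (M * N).map ((↑) : ℝ → ℂ) = M.map (↑) * N.map (↑) :=
    Matrix.map_mul (f := Complex.ofRealHom)
  simp only [Module.End.mul_apply, classicalChannel_apply, diag_diagonal, mulVec_mulVec, hmap]

lemma classicalChannel_pow (M : Matrix (Fin d) (Fin d) ℝ) {k : ℕ} (hk : k ≠ 0) :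
    classicalChannel M ^ k = classicalChannel (M ^ k) := by
  induction k with
  | zero => exact absurd rfl hk
  | succ k ih =>
    rcases eq_or_ne k 0 with rfl | hk
    · simp
    · rw [pow_succ, ih hk, classicalChannel_mul, ← pow_succ]

lemma trace_classicalChannel_pureState_mul (M : Matrix (Fin d) (Fin d) ℝ) (ψ φ : Fin d → ℂ) :
    (classicalChannel M (pureState ψ) * classicalChannel M (pureState φ)).trace =
      (((M *ᵥ fun k => Complex.normSq (ψ k)) ⬝ᵥ (M *ᵥ fun k => Complex.normSq (φ k)) : ℝ) : ℂ) := by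
  have hdiag : ∀ χ : Fin d → ℂ, M.map (↑) *ᵥ (pureState χ).diag =
      fun i => ((M *ᵥ fun k => Complex.normSq (χ k)) i : ℂ) := fun χ => by
    ext i
    simp [mulVec, dotProduct, pureState, Complex.mul_conj]
  simp [classicalChannel_apply, diagonal_mul_diagonal, trace_diagonal, hdiag, dotProduct]

lemma IsUnitVec.exists_ne_zero {ψ : Fin d → ℂ} (hψ : IsUnitVec ψ) : ∃ k, ψ k ≠ 0 := by
  by_contra! h
  simp [IsUnitVec, h] at hψ

lemma isUnitVec_single (i : Fin d) : IsUnitVec (Pi.single i (1 : ℂ)) := by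
  simp [IsUnitVec, Pi.single_apply]

lemma cScrambling_classicalChannel_iff {M : Matrix (Fin d) (Fin d) ℝ}
    (hM : ColumnStochastic M) : CScrambling (classicalChannel M) ↔ MatScrambling M := by
  constructor
  · intro h i j
    rcases eq_or_ne i j with rfl | hij
    · obtain ⟨k, hk⟩ := hM.exists_pos i
      exact ⟨k, mul_pos hk hk⟩
    have hpos := h _ _ (isUnitVec_single i) (isUnitVec_single j)
      (by simp [Pi.single_apply, hij.symm])
    have hcol : ∀ l : Fin d,
        (fun k => Complex.normSq ((Pi.single l 1 : Fin d → ℂ) k)) = Pi.single l 1 := by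
      intro l
      ext k
      by_cases hk : k = l <;> simp [hk]
    rw [trace_classicalChannel_pureState_mul, Complex.zero_lt_real] at hpos
    simp only [hcol, mulVec_single_one] at hpos
    obtain ⟨k, -, hk⟩ :=
      (Finset.sum_pos_iff_of_nonneg fun k _ => mul_nonneg (hM.1 k i) (hM.1 k j)).mp hpos
    exact ⟨k, hk⟩
  · intro h ψ φ hψ hφ _
    rw [trace_classicalChannel_pureState_mul, Complex.zero_lt_real]
    have hnonneg (χ : Fin d → ℂ) : ∀ k, 0 ≤ (M *ᵥ fun k => Complex.normSq (χ k)) k :=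
      nonneg_mulVec_of_mem_colStochastic hM.mem_colStochastic fun _ => Complex.normSq_nonneg _
    have hpos {χ : Fin d → ℂ} {k l : Fin d} (hkl : 0 < M k l) (hl : χ l ≠ 0) :
        0 < (M *ᵥ fun k => Complex.normSq (χ k)) k :=
      Finset.sum_pos' (fun j _ => mul_nonneg (hM.1 k j) (Complex.normSq_nonneg (χ j)))
        ⟨l, Finset.mem_univ _, mul_pos hkl (Complex.normSq_pos.mpr hl)⟩
    obtain ⟨i, hi⟩ := hψ.exists_ne_zero
    obtain ⟨j, hj⟩ := hφ.exists_ne_zero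
    obtain ⟨k, hk⟩ := h i j
    exact Finset.sum_pos' (fun l _ => mul_nonneg (hnonneg ψ l) (hnonneg φ l))
      ⟨k, Finset.mem_univ _, mul_pos (hpos (pos_of_mul_pos_left hk (hM.1 k j)) hi)
        (hpos (pos_of_mul_pos_right hk (hM.1 k i)) hj)⟩

lemma isChannel_classicalChannel {M : Matrix (Fin d) (Fin d) ℝ} (hM : ColumnStochastic M) :
    IsChannel (classicalChannel M) := by
  have hsqrt : ∀ a b, (star (√(M a b) : ℂ)) * √(M a b) = M a b := fun a b => by
    rw [Complex.star_def, Complex.conj_ofReal, ← Complex.ofReal_mul, Real.mul_self_sqrt (hM.1 a b)]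
  have hsum : ∀ (a : Fin d) (f : Fin d → ℂ), ∑ b, single a a (f b) = single a a (∑ b, f b) :=
    fun a f => (map_sum (singleAddMonoidHom a a) f _).symm
  refine isChannel_of_kraus (fun p : Fin d × Fin d => single p.1 p.2 (√(M p.1 p.2) : ℂ))
    (fun X => ?_) ?_
  · calc classicalChannel M X = ∑ a, single a a (∑ b, (M a b : ℂ) * X b b) := by
          rw [classicalChannel_apply, ← sum_single_eq_diagonal]
          rfl
      _ = _ := by
          simp only [Fintype.sum_prod_type, ← hsum, conjTranspose_single, single_mul_mul_single]
          congr! 3 with a - b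
          rw [← hsqrt]
          ring
  · calc ∑ p : Fin d × Fin d,
          (single p.1 p.2 (√(M p.1 p.2) : ℂ))ᴴ * single p.1 p.2 (√(M p.1 p.2) : ℂ)
          = ∑ b, single b b (((∑ a, M a b : ℝ)) : ℂ) := by
          simp only [Fintype.sum_prod_type, conjTranspose_single, single_mul_single_same, hsqrt,
            Complex.ofReal_sum, ← hsum]
          exact Finset.sum_comm
      _ = 1 := by simp only [hM.2, Complex.ofReal_one, sum_single_one]

lemma cTime_classicalChannel {M : Matrix (Fin d) (Fin d) ℝ} (hM : ColumnStochastic M) :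
    cTime (classicalChannel M) = cMat M := by
  unfold cTime cMat
  congr! 3 with N
  refine exists_congr fun k => and_congr_right fun _ => and_congr_right fun hk => ?_
  rw [classicalChannel_pow M (by omega), cScrambling_classicalChannel_iff (hM.pow k)]

end classicalChannel

namespace Amat

variable {d : ℕ}

lemma apply_pos_iff {i j : Fin d} :
    0 < Amat d i j ↔ ((i : ℕ) = d - 1 ∧ (j : ℕ) = 0) ∨
      ((j : ℕ) = 1 ∧ ((i : ℕ) = 0 ∨ (i : ℕ) = d - 1)) ∨ (2 ≤ (j : ℕ) ∧ (i : ℕ) + 1 = j) := by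
  simp only [Amat, of_apply]
  split_ifs <;> norm_num <;> omega

lemma nonneg (i j : Fin d) : 0 ≤ Amat d i j := by
  simp only [Amat, of_apply]
  split_ifs <;> norm_num

lemma columnStochastic : ColumnStochastic (Amat d) := by
  refine ⟨nonneg, fun j => ?_⟩
  have hj := j.isLt
  rcases Nat.lt_trichotomy (j : ℕ) 1 with hj | hj | hj <;> [
    rw [Fintype.sum_eq_single ⟨d - 1, by omega⟩ fun i hi => ?_];
    rw [Fintype.sum_eq_add ⟨0, by omega⟩ ⟨d - 1, by omega⟩ (by simp [Fin.ext_iff]; omega)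
      fun i hi => ?_];
    rw [Fintype.sum_eq_single ⟨j - 1, by omega⟩ fun i hi => ?_]]
  all_goals
    (try simp only [Ne, Fin.ext_iff] at hi)
    simp only [Amat, of_apply]
    split_ifs <;> norm_num at * <;> omega

def distToOne (x : Fin d) : ℕ := if (x : ℕ) = 0 then d - 1 else x - 1

lemma distToOne_lt (x : Fin d) : distToOne x < d := by
  have := x.isLt
  unfold distToOne
  split_ifs <;> omega

lemma natCast_distToOne (x : Fin d) : (distToOne x : ZMod d) = (x : ℕ) - 1 := by
  unfold distToOne
  split_ifs with hx
  · rw [ZMod.natCast_pred_self (by omega), hx, Nat.cast_zero, zero_sub]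
  · rw [Nat.cast_sub (by omega), Nat.cast_one]

lemma apply_pos_of_succ {z w : Fin d} (h : ((z + 1 : ℕ) : ZMod d) = (w : ℕ)) :
    0 < Amat d z w := by
  have hz := z.isLt
  rw [ZMod.natCast_eq_natCast_iff', Nat.mod_eq_of_lt w.isLt] at h
  rw [apply_pos_iff]
  rcases Nat.lt_or_ge ((z : ℕ) + 1) d with hlt | hge
  · rw [Nat.mod_eq_of_lt hlt] at h
    omega
  · rw [show (z : ℕ) + 1 = d by omega, Nat.mod_self] at h
    omega

lemma pow_apply_pos_of_descent {r : ℕ} {z x : Fin d}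
    (h : ((z + r : ℕ) : ZMod d) = (x : ℕ)) : 0 < (Amat d ^ r) z x := by
  induction r generalizing z with
  | zero =>
    obtain rfl := Fin.eq_of_natCast_zmod_eq h
    simp
  | succ r ih =>
    let w : Fin d := ⟨((z : ℕ) + 1) % d, Nat.mod_lt _ (Fin.pos z)⟩
    rw [pow_succ', mul_apply_pos_iff nonneg (pow_apply_nonneg nonneg r)]
    refine ⟨w, apply_pos_of_succ (ZMod.natCast_mod _ d).symm, ih ?_⟩
    push_cast [w, ZMod.natCast_mod] at h ⊢
    linear_combination h

lemma pow_apply_pos_loop (hd : 2 ≤ d) (k : ℕ) :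
    0 < (Amat d ^ (k * (d - 1))) ⟨1, by omega⟩ ⟨1, by omega⟩ := by
  induction k with
  | zero => simp
  | succ k ih =>
    have hloop : 0 < (Amat d ^ (d - 2 + 1)) ⟨1, by omega⟩ ⟨1, by omega⟩ := by
      refine pow_add_apply_pos nonneg (j := ⟨d - 1, by omega⟩)
        (pow_apply_pos_of_descent (by congr 1; dsimp only; omega)) ?_
      rw [pow_one, apply_pos_iff]
      simp
    rw [add_one_mul, add_comm]
    exact pow_add_apply_pos nonneg (by rwa [show d - 2 + 1 = d - 1 by omega] at hloop) ih

/- The extra term `d - z`, the number of steps since the last use of the chord, is what keeps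
the induction going through the chord steps. -/
lemma exists_chords_of_pow_apply_pos (hd : 2 ≤ d) {n : ℕ} {z x : Fin d}
    (h : 0 < (Amat d ^ n) z x) : ∃ c : ℕ, ((z + n + c : ℕ) : ZMod d) = (x : ℕ) ∧
      (c = 0 ∨ distToOne x + (c - 1) * (d - 1) + (d - z) ≤ n) := by
  induction n generalizing z with
  | zero =>
    rw [pow_zero, one_apply] at h
    split_ifs at h with hzx
    · exact ⟨0, by simp [hzx], Or.inl rfl⟩
    · exact absurd h (lt_irrefl 0)
  | succ n ih =>
    rw [pow_succ', mul_apply_pos_iff nonneg (pow_apply_nonneg nonneg n)] at h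
    obtain ⟨w, hzw, hw⟩ := h
    obtain ⟨c, hc, hbound⟩ := ih hw
    rcases apply_pos_iff.mp hzw with ⟨hz, hw0⟩ | ⟨hw1, hz | hz⟩ | ⟨hw2, hz⟩
    · exact ⟨c, (ZMod.natCast_eq_of_eq_add_mul (k := 1) (by omega)).trans hc, by omega⟩
    · exact ⟨c, (ZMod.natCast_eq_of_eq_add_mul (k := 0) (by omega)).trans hc, by omega⟩
    · refine ⟨c + 1, (ZMod.natCast_eq_of_eq_add_mul (k := 1) (by omega)).trans hc, Or.inr ?_⟩
      rcases c with _ | c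
      · have hdist : distToOne x ≤ n := by
          refine ZMod.le_of_natCast_eq (distToOne_lt x) ?_
          rw [natCast_distToOne, ← hc]
          push_cast [hw1]
          ring
        omega
      · replace hbound := hbound.resolve_left c.succ_ne_zero
        simp only [Nat.add_sub_cancel, add_one_mul] at hbound ⊢
        omega
    · exact ⟨c, (ZMod.natCast_eq_of_eq_add_mul (k := 0) (by omega)).trans hc, by omega⟩

/-- `c` counts the uses of the chord `1 → d - 1`. -/
theorem pow_apply_pos_iff (hd : 2 ≤ d) {n : ℕ} {z x : Fin d} :
    0 < (Amat d ^ n) z x ↔ ∃ c : ℕ, ((z + n + c : ℕ) : ZMod d) = (x : ℕ) ∧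
      (c = 0 ∨ distToOne x + (c - 1) * (d - 1) < n) := by
  refine ⟨fun h => ?_, fun ⟨c, hc, hbound⟩ => ?_⟩
  · obtain ⟨c, hc, hbound⟩ := exists_chords_of_pow_apply_pos hd h
    exact ⟨c, hc, by have := z.isLt; omega⟩
  rcases c with _ | c
  · exact pow_apply_pos_of_descent (by simpa using hc)
  replace hbound : distToOne x + c * (d - 1) < n := by simpa using hbound
  obtain ⟨r, rfl⟩ : ∃ r, n = r + 1 + c * (d - 1) + distToOne x :=
    ⟨n - 1 - c * (d - 1) - distToOne x, by omega⟩
  let one : Fin d := ⟨1, by omega⟩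
  let last : Fin d := ⟨d - 1, by omega⟩
  have hdescent : 0 < (Amat d ^ r) z last := by
    refine pow_apply_pos_of_descent ?_
    have hm : ((d - 1 : ℕ) : ZMod d) = -1 := ZMod.natCast_pred_self (by omega)
    push_cast [last, hm, natCast_distToOne] at hc ⊢
    linear_combination hc
  have hchord : 0 < (Amat d ^ 1) last one := by
    rw [pow_one, apply_pos_iff]
    simp [last, one]
  have hstart : 0 < (Amat d ^ distToOne x) one x := by
    refine pow_apply_pos_of_descent ?_
    push_cast [one, natCast_distToOne]
    ring
  exact pow_add_apply_pos nonneg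
    (pow_add_apply_pos nonneg (pow_add_apply_pos nonneg hdescent hchord) (pow_apply_pos_loop hd c))
    hstart

lemma lt_scramblingTime_iff (hd : 1 ≤ d) {y : ℕ} :
    y < (d ^ 2 - 2 * d + 3) / 2 ↔ 2 * y ≤ (d - 1) ^ 2 := by
  obtain ⟨m, rfl⟩ : ∃ m, d = m + 1 := ⟨d - 1, by omega⟩
  have h : (m + 1) ^ 2 = m ^ 2 + 2 * m + 1 := by ring
  rw [h, Nat.add_sub_cancel]
  omega

lemma chord_budget {m a b δ : ℕ} (ha : a ≤ m) (hab : a = b + δ) :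
    (δ = 0 ∨ 2 * (a + (δ - 1) * m) ≤ m ^ 2) ∨ 2 * (b + (m - δ) * m) ≤ m ^ 2 := by
  rcases le_or_gt (2 * δ) m with h | h
  · left
    rcases δ with _ | δ
    · exact Or.inl rfl
    · right
      rw [Nat.add_sub_cancel]
      nlinarith
  · right
    obtain ⟨e, rfl⟩ : ∃ e, m = δ + e := ⟨m - δ, by omega⟩
    rw [Nat.add_sub_cancel_left]
    nlinarith

lemma two_mul_lt_of_chord_budget {m c : ℕ} (h : 2 * (c * m + 1) ≤ m ^ 2) : 2 * c < m := by
  by_contra! hc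
  nlinarith

lemma lt_of_chord_budget {m e c : ℕ} (he : m ≤ 2 * e + 1) (h : 2 * (e + c * m + 1) ≤ m ^ 2) :
    c < e := by
  by_contra! hc
  nlinarith

lemma exists_add_natCast_eq (hd : 0 < d) (r : ℕ) (y : Fin d) :
    ∃ z : Fin d, ((z + r : ℕ) : ZMod d) = (y : ℕ) := by
  have : NeZero d := ⟨hd.ne'⟩
  refine ⟨⟨(((y : ℕ) : ZMod d) - r).val, ZMod.val_lt _⟩, ?_⟩
  push_cast [ZMod.natCast_zmod_val]
  ring

theorem matScrambling_pow (hd : 2 ≤ d) :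
    MatScrambling (Amat d ^ ((d ^ 2 - 2 * d + 3) / 2)) := by
  intro x x'
  wlog hxx' : distToOne x' ≤ distToOne x generalizing x x'
  · obtain ⟨z, hz⟩ := this x' x (by omega)
    exact ⟨z, by rwa [mul_comm]⟩
  set N := (d ^ 2 - 2 * d + 3) / 2
  obtain ⟨δ, hδ⟩ := Nat.exists_eq_add_of_le hxx'
  have hshift : ((x' + δ : ℕ) : ZMod d) = (x : ℕ) := by
    have h := natCast_distToOne x
    rw [hδ, Nat.cast_add, natCast_distToOne] at h
    push_cast
    linear_combination h
  have hδd : δ < d := by have := distToOne_lt x; omega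
  rcases chord_budget (m := d - 1) (by have := distToOne_lt x; omega) hδ with h | h
  · obtain ⟨z, hz⟩ := exists_add_natCast_eq (by omega) N x'
    refine ⟨z, mul_pos ((pow_apply_pos_iff hd).mpr ⟨δ, ?_, ?_⟩)
      ((pow_apply_pos_iff hd).mpr ⟨0, by simpa using hz, Or.inl rfl⟩)⟩
    · push_cast at hz hshift ⊢
      linear_combination hz + hshift
    · exact h.imp_right (lt_scramblingTime_iff (by omega)).mpr
  · obtain ⟨z, hz⟩ := exists_add_natCast_eq (by omega) N x
    refine ⟨z, mul_pos ((pow_apply_pos_iff hd).mpr ⟨0, by simpa using hz, Or.inl rfl⟩)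
      ((pow_apply_pos_iff hd).mpr ⟨d - δ, ?_, Or.inr ?_⟩)⟩
    · push_cast [Nat.cast_sub hδd.le, ZMod.natCast_self] at hz hshift ⊢
      linear_combination hz - hshift
    · rw [Nat.sub_right_comm]
      exact (lt_scramblingTime_iff (by omega)).mpr h

theorem not_matScrambling_pow (hd : 2 ≤ d) {k : ℕ} (hk : k < (d ^ 2 - 2 * d + 3) / 2) :
    ¬ MatScrambling (Amat d ^ k) := by
  intro h
  obtain ⟨z, hz⟩ := h ⟨0, by omega⟩ ⟨d - d / 2, by omega⟩
  have hnonneg := pow_apply_nonneg (nonneg (d := d)) k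
  obtain ⟨c, hc, hbound⟩ := (pow_apply_pos_iff hd).mp (pos_of_mul_pos_left hz (hnonneg _ _))
  obtain ⟨c', hc', hbound'⟩ := (pow_apply_pos_iff hd).mp (pos_of_mul_pos_right hz (hnonneg _ _))
  simp only [distToOne, if_pos, if_neg (show d - d / 2 ≠ 0 by omega)] at hbound hbound'
  have hN {y : ℕ} : y < (d ^ 2 - 2 * d + 3) / 2 → 2 * y ≤ (d - 1) ^ 2 :=
    (lt_scramblingTime_iff (by omega)).mp
  have hc_lt : c < d / 2 := by
    rcases c with _ | c
    · omega
    replace hbound := hbound.resolve_left c.succ_ne_zero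
    rw [Nat.add_sub_cancel] at hbound
    have := two_mul_lt_of_chord_budget (m := d - 1) (c := c + 1) (hN (by rw [add_one_mul]; omega))
    omega
  have hc'_lt : c' < d - d / 2 := by
    rcases c' with _ | c'
    · omega
    replace hbound' := hbound'.resolve_left c'.succ_ne_zero
    rw [Nat.add_sub_cancel] at hbound'
    have := lt_of_chord_budget (m := d - 1) (e := d - d / 2 - 1) (c := c') (by omega)
      (hN (by omega))
    omega
  have hcc' : c + (d - d / 2) = c' := by
    have h := congrArg ZMod.val (show ((c + (d - d / 2) : ℕ) : ZMod d) = (c' : ℕ) by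
      push_cast at hc hc' ⊢
      linear_combination hc - hc')
    rwa [ZMod.val_cast_of_lt (by omega), ZMod.val_cast_of_lt (by omega)] at h
  omega

theorem cMat_eq (hd : 2 ≤ d) : cMat (Amat d) = ((d ^ 2 - 2 * d + 3) / 2 : ℕ) := by
  have hN : 1 ≤ (d ^ 2 - 2 * d + 3) / 2 := (lt_scramblingTime_iff (by omega)).mpr (by simp)
  refine le_antisymm (sInf_le ⟨_, rfl, hN, matScrambling_pow hd⟩) (le_sInf ?_)
  rintro _ ⟨k, rfl, -, hk⟩
  exact Nat.cast_le.mpr (not_lt.mp fun hlt => not_matScrambling_pow hd hlt hk)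

end Amat

/-- The classical channel of the stochastic matrix `A_d` has classical
scrambling time `⌈(d² − 2d + 2)/2⌉`; in particular there is a channel on `M_d(ℂ)`
attaining this scrambling time. -/
theorem scrambling_time_of_Amat (d : ℕ) (hd : 2 ≤ d) :
    cTime (classicalChannel (Amat d)) = (((d ^ 2 - 2 * d + 3) / 2 : ℕ) : ℕ∞) ∧
    ∃ Φ : Module.End ℂ (Mat d), IsChannel Φ ∧
      cTime Φ = (((d ^ 2 - 2 * d + 3) / 2 : ℕ) : ℕ∞) := by
  have hcTime : cTime (classicalChannel (Amat d)) = (((d ^ 2 - 2 * d + 3) / 2 : ℕ) : ℕ∞) :=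
    (cTime_classicalChannel Amat.columnStochastic).trans (Amat.cMat_eq hd)
  exact ⟨hcTime, _, isChannel_classicalChannel Amat.columnStochastic, hcTime⟩
end

section
/- For any quantum channel Φ on M_d(ℂ), the fixed-point space Fix_Φ = {A ∈ M_d(ℂ) : Φ(A) = A} is spanned, as a complex vector space, by the quantum states it contains: every A ∈ M_d(ℂ) with Φ(A) = A is a ℂ-linear combination of quantum states ρ satisfying Φ(ρ) = ρ. -/
open Matrix Filter
open scoped ComplexOrder

/-!
A channel commutes with taking adjoints, so the Hermitian and anti-Hermitian parts of a fixed
point are fixed, and it suffices to treat a fixed Hermitian `B = B⁺ - B⁻`. Positivity and trace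
preservation make `X = Φ B⁺` a positive matrix above `Φ B = B` with the trace of `B⁺`. Let `P`
be the spectral projection of `B` onto its positive eigenvalues and `Q = 1 - P`. Then
`Tr X = Tr (P X P) + Tr (Q X Q)` with `Tr (P X P) ≥ Tr (P B P) = Tr B⁺` and `Tr (Q X Q) ≥ 0`, so
equality forces `Q X Q = 0` and `P X P = P B P`, whence `X = P X P = B⁺`. Then `B⁺` and `B⁻` are fixed positive matrices, and dividing
them by their traces gives fixed states.
-/

open scoped MatrixOrder ComplexStarModule

namespace Matrix
variable {n : Type*} [Fintype n] [DecidableEq n]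

theorem IsHermitian.exists_isIdempotentElem_mul_mul_eq_posPart {B : Matrix n n ℂ}
    (hB : B.IsHermitian) :
    ∃ P : Matrix n n ℂ, P.IsHermitian ∧ IsIdempotentElem P ∧ P * B * P = B⁺ := by
  set f : ℝ → ℝ := fun x => if 0 < x then 1 else 0
  have hcont (g : ℝ → ℝ) : ContinuousOn g (spectrum ℝ B) :=
    B.finite_real_spectrum.continuousOn g
  refine ⟨cfc f B, cfc_predicate f B, ?_, ?_⟩
  · rw [IsIdempotentElem, ← cfc_mul f f B (hcont f) (hcont f)]
    congr 1
    ext x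
    by_cases hx : 0 < x <;> simp [f, hx]
  · nth_rw 2 [← cfc_id' ℝ B hB.isSelfAdjoint]
    rw [← cfc_mul _ _ B (hcont _) (hcont _), ← cfc_mul _ _ B (hcont _) (hcont _),
      CFC.posPart_def, cfcₙ_eq_cfc]
    congr 1
    ext x
    by_cases hx : 0 < x
    · simp [f, hx, hx.le]
    · simp [f, hx, posPart_eq_zero.mpr (not_lt.mp hx)]

theorem PosSemidef.mul_eq_zero_of_conjTranspose_mul_mul_eq_zero {X Q : Matrix n n ℂ}
    (hX : X.PosSemidef) (hQ : Qᴴ * X * Q = 0) : X * Q = 0 := by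
  obtain ⟨S, rfl⟩ : ∃ S : Matrix n n ℂ, X = Sᴴ * S :=
    CStarAlgebra.nonneg_iff_eq_star_mul_self.mp hX.nonneg
  have hSQ : S * Q = 0 := by
    rw [← conjTranspose_mul_self_eq_zero, conjTranspose_mul, ← hQ]
    simp only [Matrix.mul_assoc]
  rw [Matrix.mul_assoc, hSQ, Matrix.mul_zero]

theorem trace_mul_mul_add_trace_one_sub_mul_mul {P : Matrix n n ℂ} (hP : IsIdempotentElem P)
    (X : Matrix n n ℂ) : (P * X * P).trace + ((1 - P) * X * (1 - P)).trace = X.trace := by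
  rw [trace_mul_cycle, trace_mul_cycle (1 - P), hP.eq, hP.one_sub.eq, ← trace_add,
    ← Matrix.add_mul, add_sub_cancel, Matrix.one_mul]

theorem eq_posPart_of_le_of_trace_le {B X : Matrix n n ℂ} (hX : 0 ≤ X) (hBX : B ≤ X)
    (htr : X.trace ≤ (B⁺).trace) : X = B⁺ := by
  have hB : B.IsHermitian := by
    simpa using hX.posSemidef.isHermitian.sub (le_iff.mp hBX).isHermitian
  obtain ⟨P, hPh, hPP, hPBP⟩ := hB.exists_isIdempotentElem_mul_mul_eq_posPart
  set Q := 1 - P with hQ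
  have hQh : Q.IsHermitian := isHermitian_one.sub hPh
  have hP_psd : (P * X * P - P * B * P).PosSemidef := by
    simpa [star_eq_conjTranspose, hPh.eq] using le_iff.mp (star_left_conjugate_le_conjugate hBX P)
  have hQ_psd : (Q * X * Q).PosSemidef := by
    simpa [star_eq_conjTranspose, hQh.eq] using (star_left_conjugate_nonneg hX Q).posSemidef
  have hsplit : X.trace = (B⁺).trace + ((P * X * P - P * B * P).trace + (Q * X * Q).trace) := by
    rw [trace_sub, hPBP, ← trace_mul_mul_add_trace_one_sub_mul_mul hPP X]
    ring
  have hsum : (P * X * P - P * B * P).trace + (Q * X * Q).trace = 0 := by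
    rw [hsplit, add_le_iff_nonpos_right] at htr
    exact le_antisymm htr (add_nonneg hP_psd.trace_nonneg hQ_psd.trace_nonneg)
  obtain ⟨hP_zero, hQ_zero⟩ :=
    (add_eq_zero_iff_of_nonneg hP_psd.trace_nonneg hQ_psd.trace_nonneg).mp hsum
  have hXQ : X * Q = 0 := hX.posSemidef.mul_eq_zero_of_conjTranspose_mul_mul_eq_zero <| by
    rw [hQh.eq]; exact hQ_psd.trace_eq_zero_iff.mp hQ_zero
  have hQX : Q * X = 0 := by
    simpa [hQh.eq, hX.posSemidef.isHermitian.eq] using congrArg conjTranspose hXQ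
  have hXP : X = X * P := by rwa [hQ, Matrix.mul_sub, Matrix.mul_one, sub_eq_zero] at hXQ
  have hPX : X = P * X := by rwa [hQ, Matrix.sub_mul, Matrix.one_mul, sub_eq_zero] at hQX
  calc X = P * X * P := by rw [← hPX, ← hXP]
    _ = P * B * P := sub_eq_zero.mp (hP_psd.trace_eq_zero_iff.mp hP_zero)
    _ = B⁺ := hPBP

end Matrix

section PositiveTracePreserving
variable {n : Type*} [Fintype n] [DecidableEq n] {Φ : Matrix n n ℂ →ₗ[ℂ] Matrix n n ℂ}

theorem map_posPart_eq_of_map_eq (hpos : ∀ X, 0 ≤ X → 0 ≤ Φ X)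
    (htr : ∀ X, (Φ X).trace = X.trace) {B : Matrix n n ℂ} (hB : IsSelfAdjoint B)
    (hfix : Φ B = B) : Φ B⁺ = B⁺ := by
  refine Matrix.eq_posPart_of_le_of_trace_le (hpos _ (CFC.posPart_nonneg B)) ?_ (htr _).le
  calc B = Φ B⁺ - Φ B⁻ := by rw [← map_sub, CFC.posPart_sub_negPart B hB, hfix]
    _ ≤ Φ B⁺ := sub_le_self _ (hpos _ (CFC.negPart_nonneg B))

theorem map_negPart_eq_of_map_eq (hpos : ∀ X, 0 ≤ X → 0 ≤ Φ X)
    (htr : ∀ X, (Φ X).trace = X.trace) {B : Matrix n n ℂ} (hB : IsSelfAdjoint B)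
    (hfix : Φ B = B) : Φ B⁻ = B⁻ := by
  have hneg : B⁻ = B⁺ - B :=
    eq_sub_of_add_eq (sub_eq_iff_eq_add'.mp (CFC.posPart_sub_negPart B hB)).symm
  rw [hneg, map_sub, map_posPart_eq_of_map_eq hpos htr hB hfix, hfix]

end PositiveTracePreserving

theorem isState_inv_trace_smul {d : ℕ} {X : Mat d} (hX : X.PosSemidef) (h0 : X ≠ 0) :
    IsState (X.trace⁻¹ • X) := by
  have htr : X.trace ≠ 0 := fun h => h0 (hX.trace_eq_zero_iff.mp h)
  exact ⟨hX.smul (inv_nonneg_of_nonneg hX.trace_nonneg), by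
    rw [trace_smul, smul_eq_mul, inv_mul_cancel₀ htr]⟩

section FixedStates
variable {d : ℕ} {Φ : Module.End ℂ (Mat d)}

theorem posSemidef_mem_span_fixed_states {X : Mat d} (hX : X.PosSemidef) (hfix : Φ X = X) :
    X ∈ Submodule.span ℂ {ρ : Mat d | IsState ρ ∧ Φ ρ = ρ} := by
  by_cases h0 : X = 0
  · simp [h0]
  have htr : X.trace ≠ 0 := fun h => h0 (hX.trace_eq_zero_iff.mp h)
  rw [← smul_inv_smul₀ htr X]
  refine Submodule.smul_mem _ _ (Submodule.subset_span ⟨isState_inv_trace_smul hX h0, ?_⟩)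
  rw [map_smul, hfix]

theorem isSelfAdjoint_mem_span_fixed_states (hpos : ∀ X, 0 ≤ X → 0 ≤ Φ X)
    (htr : ∀ X, (Φ X).trace = X.trace) {B : Mat d} (hB : IsSelfAdjoint B) (hfix : Φ B = B) :
    B ∈ Submodule.span ℂ {ρ : Mat d | IsState ρ ∧ Φ ρ = ρ} := by
  rw [← CFC.posPart_sub_negPart B hB]
  exact sub_mem
    (posSemidef_mem_span_fixed_states (CFC.posPart_nonneg B).posSemidef
      (map_posPart_eq_of_map_eq hpos htr hB hfix))
    (posSemidef_mem_span_fixed_states (CFC.negPart_nonneg B).posSemidef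
      (map_negPart_eq_of_map_eq hpos htr hB hfix))

end FixedStates

namespace IsChannel
variable {m n : ℕ} {Φ : Matrix (Fin m) (Fin m) ℂ →ₗ[ℂ] Mat n}

theorem map_nonneg (hΦ : IsChannel Φ) {X : Matrix (Fin m) (Fin m) ℂ} (hX : 0 ≤ X) : 0 ≤ Φ X := by
  obtain ⟨p, K, hK, -⟩ := hΦ
  rw [hK]
  exact Finset.sum_nonneg fun i _ => (hX.posSemidef.mul_mul_conjTranspose_same (K i)).nonneg

theorem trace_map (hΦ : IsChannel Φ) (X : Matrix (Fin m) (Fin m) ℂ) :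
    (Φ X).trace = X.trace := by
  obtain ⟨p, K, hK, hsum⟩ := hΦ
  simp_rw [hK, trace_sum, trace_mul_cycle _ X, ← trace_sum, ← Finset.sum_mul, hsum,
    Matrix.one_mul]

theorem map_star (hΦ : IsChannel Φ) (X : Matrix (Fin m) (Fin m) ℂ) : Φ (star X) = star (Φ X) := by
  obtain ⟨p, K, hK, -⟩ := hΦ
  simp [hK, star_eq_conjTranspose, Matrix.mul_assoc]

end IsChannel

/-- The fixed-point space of a quantum channel is spanned by the
quantum states it contains. -/
theorem fixed_points_spanned_by_states (d : ℕ) (Φ : Module.End ℂ (Mat d))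
    (hΦ : IsChannel Φ) (A : Mat d) (hA : Φ A = A) :
    A ∈ Submodule.span ℂ {ρ : Mat d | IsState ρ ∧ Φ ρ = ρ} := by
  have hspan {B : Mat d} (hB : IsSelfAdjoint B) (hBfix : Φ B = B) :=
    isSelfAdjoint_mem_span_fixed_states (fun _ => hΦ.map_nonneg) hΦ.trace_map hB hBfix
  have hre : Φ (ℜ A) = ℜ A := by
    rw [realPart_apply_coe, LinearMap.map_smul_of_tower, map_add, hΦ.map_star, hA]
  have him : Φ (ℑ A) = ℑ A := by
    rw [imaginaryPart_apply_coe, map_smul, LinearMap.map_smul_of_tower, map_sub, hΦ.map_star, hA]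
  rw [← realPart_add_I_smul_imaginaryPart A]
  exact add_mem (hspan (ℜ A).2 hre) (Submodule.smul_mem _ _ (hspan (ℑ A).2 him))
end
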